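/- arXiv:1302.6745 — 6 statements merged into one kernel-verified Lean document; each statement's English description precedes it below -/
import Mathlib

section
/- Let N ∈ ℕ, let c : I → ℝ^N be a differentiable solution of the finite N-dimensional RBK system on an interval I, let (g_j)_{1≤j≤N} be any real sequence and let m ∈ {1,…,N}. Then for every t ∈ I: Σ_{j=m}^{N} g_j c_j'(t) = − Σ_{(j,k)∈T₁} (g_j − g_{j−k}) a_{j,k} c_j(t) c_k(t) − Σ_{(j,k)∈T₂} g_j a_{j,k} c_j(t) c_k(t), where T₁ = {(j,k) : m ≤ j ≤ N, 1 ≤ k ≤ N, k ≤ j−m} and T₂ = {(j,k) : m ≤ j ≤ N, 1 ≤ k ≤ N, k ≥ j−m+1}. -/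
/-!
Multiply the `j`-th equation by `g j` and sum over `m ≤ j ≤ N`. The gain term of equation `j`
collects the pairs `(j + k, k)` with `k ≤ N - j`; reindexing by `i = j + k` turns it into a sum
over `T₁` weighted by `g (i - k)`. The loss term is a sum over all of `[m, N] × [1, N]`, which
`T₁` and `T₂` partition. This is an identity for every state; differentiation is linear.
-/

open Finset

def rbkRate (a : ℕ → ℕ → ℝ) (N : ℕ) (x : ℕ → ℝ) (j : ℕ) : ℝ :=
  (∑ k ∈ Icc 1 (N - j), a (j + k) k * x (j + k) * x k) - ∑ k ∈ Icc 1 N, a j k * x j * x k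

/-- The index set `T₁` of the statement. -/
def lowerPairs (m N : ℕ) : Finset (ℕ × ℕ) :=
  (Icc m N ×ˢ Icc 1 N).filter fun p => p.2 ≤ p.1 - m

/-- The index set `T₂` of the statement. -/
def upperPairs (m N : ℕ) : Finset (ℕ × ℕ) :=
  (Icc m N ×ˢ Icc 1 N).filter fun p => p.1 - m + 1 ≤ p.2

section Pairs

variable {M : Type*} [AddCommMonoid M] (m N : ℕ)

theorem sum_Icc_sum_Icc_add_eq_sum_lowerPairs (F : ℕ → ℕ → M) :
    ∑ j ∈ Icc m N, ∑ k ∈ Icc 1 (N - j), F (j + k) k = ∑ p ∈ lowerPairs m N, F p.1 p.2 := by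
  rw [sum_sigma']
  refine sum_nbij' (fun x => (x.1 + x.2, x.2)) (fun p => ⟨p.1 - p.2, p.2⟩) ?_ ?_ ?_ ?_ ?_
  · intro x hx
    simp only [mem_sigma, mem_Icc] at hx
    simp only [lowerPairs, mem_filter, mem_product, mem_Icc]
    omega
  · intro p hp
    simp only [lowerPairs, mem_filter, mem_product, mem_Icc] at hp
    simp only [mem_sigma, mem_Icc]
    omega
  · intro x _
    simp only [Nat.add_sub_cancel]
  · intro p hp
    simp only [lowerPairs, mem_filter, mem_product, mem_Icc] at hp
    ext <;> simp only; omega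
  · intro x _
    rfl

theorem sum_lowerPairs_add_sum_upperPairs (f : ℕ × ℕ → M) :
    ∑ p ∈ lowerPairs m N, f p + ∑ p ∈ upperPairs m N, f p = ∑ p ∈ Icc m N ×ˢ Icc 1 N, f p := by
  have upper : upperPairs m N = (Icc m N ×ˢ Icc 1 N).filter fun p => ¬p.2 ≤ p.1 - m :=
    filter_congr fun p _ => by omega
  rw [upper, lowerPairs, sum_filter_add_sum_filter_not]

end Pairs

theorem sum_mul_rbkRate (a : ℕ → ℕ → ℝ) (N m : ℕ) (g x : ℕ → ℝ) :
    ∑ j ∈ Icc m N, g j * rbkRate a N x j =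
      -(∑ p ∈ lowerPairs m N, (g p.1 - g (p.1 - p.2)) * (a p.1 p.2 * x p.1 * x p.2))
        - ∑ p ∈ upperPairs m N, g p.1 * (a p.1 p.2 * x p.1 * x p.2) := by
  have gain : ∑ j ∈ Icc m N, ∑ k ∈ Icc 1 (N - j), g j * (a (j + k) k * x (j + k) * x k) =
      ∑ p ∈ lowerPairs m N, g (p.1 - p.2) * (a p.1 p.2 * x p.1 * x p.2) := by
    simpa only [Nat.add_sub_cancel] using sum_Icc_sum_Icc_add_eq_sum_lowerPairs m N
      fun i k => g (i - k) * (a i k * x i * x k)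
  have loss : ∑ j ∈ Icc m N, ∑ k ∈ Icc 1 N, g j * (a j k * x j * x k) =
      ∑ p ∈ lowerPairs m N, g p.1 * (a p.1 p.2 * x p.1 * x p.2) +
        ∑ p ∈ upperPairs m N, g p.1 * (a p.1 p.2 * x p.1 * x p.2) := by
    rw [sum_lowerPairs_add_sum_upperPairs, sum_product]
  simp only [rbkRate, mul_sub, mul_sum, sum_sub_distrib, gain, loss, sub_mul]
  ring

theorem rbk_finite_moment_identity_general
    (a : ℕ → ℕ → ℝ)
    (N : ℕ)
    (I : Set ℝ)
    (c : ℝ → ℕ → ℝ)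
    (hode : ∀ j ∈ Finset.Icc 1 N, ∀ t ∈ I,
      HasDerivAt (fun s => c s j)
        ((∑ k ∈ Finset.Icc 1 (N - j), a (j + k) k * c t (j + k) * c t k) -
         (∑ k ∈ Finset.Icc 1 N, a j k * c t j * c t k)) t)
    (g : ℕ → ℝ) (m : ℕ) (hm : 1 ≤ m)
    (t : ℝ) (ht : t ∈ I) :
    HasDerivAt (fun s => ∑ j ∈ Finset.Icc m N, g j * c s j)
      (-(∑ p ∈ (Finset.Icc m N ×ˢ Finset.Icc 1 N).filter (fun p => p.2 ≤ p.1 - m),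
            (g p.1 - g (p.1 - p.2)) * (a p.1 p.2 * c t p.1 * c t p.2))
        - ∑ p ∈ (Finset.Icc m N ×ˢ Finset.Icc 1 N).filter (fun p => p.1 - m + 1 ≤ p.2),
            g p.1 * (a p.1 p.2 * c t p.1 * c t p.2)) t := by
  have hderiv : HasDerivAt (fun s => ∑ j ∈ Icc m N, g j * c s j)
      (∑ j ∈ Icc m N, g j * rbkRate a N (c t) j) t := by
    refine HasDerivAt.fun_sum fun j hj => (hode j ?_ t ht).const_mul (g j)
    simp only [mem_Icc] at hj ⊢
    omega
  exact sum_mul_rbkRate a N m g (c t) ▸ hderiv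

theorem rbk_finite_moment_identity
    (a : ℕ → ℕ → ℝ)
    (hsym : ∀ j k : ℕ, 1 ≤ j → 1 ≤ k → a j k = a k j)
    (hpos : ∀ j k : ℕ, 1 ≤ j → 1 ≤ k → 0 ≤ a j k)
    (N : ℕ) (hN : 1 ≤ N)
    (I : Set ℝ) (hI : I.OrdConnected)
    (c : ℝ → ℕ → ℝ)
    (hode : ∀ j ∈ Finset.Icc 1 N, ∀ t ∈ I,
      HasDerivAt (fun s => c s j)
        ((∑ k ∈ Finset.Icc 1 (N - j), a (j + k) k * c t (j + k) * c t k) -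
         (∑ k ∈ Finset.Icc 1 N, a j k * c t j * c t k)) t)
    (g : ℕ → ℝ) (m : ℕ) (hm : 1 ≤ m) (hmN : m ≤ N)
    (t : ℝ) (ht : t ∈ I) :
    HasDerivAt (fun s => ∑ j ∈ Finset.Icc m N, g j * c s j)
      (-(∑ p ∈ (Finset.Icc m N ×ˢ Finset.Icc 1 N).filter (fun p => p.2 ≤ p.1 - m),
            (g p.1 - g (p.1 - p.2)) * (a p.1 p.2 * c t p.1 * c t p.2))
        - ∑ p ∈ (Finset.Icc m N ×ˢ Finset.Icc 1 N).filter (fun p => p.1 - m + 1 ≤ p.2),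
            g p.1 * (a p.1 p.2 * c t p.1 * c t p.2)) t :=
  rbk_finite_moment_identity_general a N I c hode g m hm t ht
end

section
/- Let N ∈ ℕ and let c₀ ∈ ℝ^N have all components nonnegative. Then there exists a continuously differentiable function c : [0,∞) → ℝ^N with c(0) = c₀ that satisfies the finite N-dimensional RBK system for all t ≥ 0 and moreover c_j(t) ≥ 0 for all j ∈ {1,…,N} and all t ≥ 0. -/
/-!
Clamp every coordinate to `[0, S]`, where `S = ∑ⱼ c0 j` is the initial mass. The clamped
vector field is globally Lipschitz and bounded, so its solution exists for all `t ≥ 0`.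
A negative coordinate is clamped to zero, which kills its loss term and leaves a nonnegative gain,
so the solution stays nonnegative. The mass `∑ⱼ cⱼ` is then nonincreasing, since every gain term
`a (j+k) k * c (j+k) * c k` also occurs among the losses. Hence all coordinates stay in `[0, S]`,
where the clamp is the identity, and the clamped solution solves the RBK system itself.
-/

open Set NNReal

section ODE

variable {E : Type*} [NormedAddCommGroup E] [NormedSpace ℝ E] [CompleteSpace E]
  {v : E → E} {K : ℝ≥0} {C : ℝ}

theorem exists_forall_mem_Icc_hasDerivAt_of_lipschitzWith_of_norm_le
    (hv : LipschitzWith K v) (hC : ∀ x, ‖v x‖ ≤ C) (x₀ : E) (T : ℕ) :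
    ∃ f : ℝ → E, f 0 = x₀ ∧ ∀ t ∈ Icc (0 : ℝ) T, HasDerivAt f (v (f t)) t := by
  set T' : ℝ≥0 := T + 1
  have hpl : IsPicardLindelof (fun _ ↦ v) (tmin := -T') (tmax := T')
      ⟨0, by simp⟩ x₀ (C.toNNReal * T') 0 C.toNNReal K :=
    .of_time_independent (fun x _ ↦ (hC x).trans (Real.le_coe_toNNReal C))
      hv.lipschitzOnWith (by simp)
  obtain ⟨f, hf0, hf⟩ := hpl.exists_eq_forall_mem_Icc_hasDerivWithinAt₀
  refine ⟨f, hf0, fun t ht ↦ ?_⟩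
  have ht' : t ∈ Ioo (-T' : ℝ) T' := by
    simp only [T', mem_Ioo, NNReal.coe_add, NNReal.coe_natCast, NNReal.coe_one]
    constructor <;> linarith [ht.1, ht.2]
  exact (hf t (Ioo_subset_Icc_self ht')).hasDerivAt (Icc_mem_nhds ht'.1 ht'.2)

theorem exists_forall_hasDerivWithinAt_Ici_of_lipschitzWith_of_norm_le
    (hv : LipschitzWith K v) (hC : ∀ x, ‖v x‖ ≤ C) (x₀ : E) :
    ∃ x : ℝ → E, x 0 = x₀ ∧ ∀ t, 0 ≤ t → HasDerivWithinAt x (v (x t)) (Ici 0) t := by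
  choose f hf0 hf using exists_forall_mem_Icc_hasDerivAt_of_lipschitzWith_of_norm_le hv hC x₀
  have hagree : ∀ n m : ℕ, ∀ t ∈ Icc (0 : ℝ) n, t ≤ m → f n t = f m t := by
    intro n m t ht htm
    have hsol : ∀ p : ℕ, t ≤ p → ContinuousOn (f p) (Icc 0 t) ∧
        ∀ s ∈ Ico 0 t, HasDerivWithinAt (f p) (v (f p s)) (Ici s) s := fun p hp ↦
      ⟨fun s hs ↦ (hf p s ⟨hs.1, hs.2.trans hp⟩).continuousAt.continuousWithinAt,
        fun s hs ↦ (hf p s ⟨hs.1, hs.2.le.trans hp⟩).hasDerivWithinAt⟩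
    exact ODE_solution_unique (v := fun _ ↦ v) (fun _ ↦ hv) (hsol n ht.2).1 (hsol n ht.2).2
      (hsol m htm).1 (hsol m htm).2 ((hf0 n).trans (hf0 m).symm) ⟨ht.1, le_rfl⟩
  have hlt (s : ℝ) : s < (⌊s⌋₊ + 1 : ℕ) := by exact_mod_cast Nat.lt_floor_add_one s
  refine ⟨fun t ↦ f (⌊t⌋₊ + 1) t, by simp [hf0], fun t ht ↦ ?_⟩
  set n := ⌊t⌋₊ + 1
  have heq : (fun s ↦ f (⌊s⌋₊ + 1) s) =ᶠ[nhdsWithin t (Ici 0)] f n := by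
    filter_upwards [nhdsWithin_le_nhds (Iio_mem_nhds (hlt t)), self_mem_nhdsWithin] with s hsn hs
    exact hagree _ n s ⟨hs, (hlt s).le⟩ hsn.le
  exact (hf n t ⟨ht, (hlt t).le⟩).hasDerivWithinAt.congr_of_eventuallyEq heq rfl

end ODE

theorem LocallyLipschitz.exists_lipschitzWith_comp {X Y Z : Type*} [PseudoMetricSpace X]
    [PseudoMetricSpace Y] [PseudoMetricSpace Z] {F : Y → Z} {P : X → Y} {s : Set Y} {K : ℝ≥0}
    (hF : LocallyLipschitz F) (hP : LipschitzWith K P) (hs : IsCompact s) (hPs : ∀ x, P x ∈ s) :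
    ∃ L, LipschitzWith L (F ∘ P) := by
  obtain ⟨L, hL⟩ := hF.locallyLipschitzOn.exists_lipschitzOnWith_of_compact hs
  exact ⟨L * K, lipschitzOnWith_univ.1 <| hL.comp hP.lipschitzOnWith fun x _ ↦ hPs x⟩

section BoxClamp

variable {ι : Type*}

def boxClamp (S : ℝ) (x : ι → ℝ) : ι → ℝ := fun i ↦ max 0 (min (x i) S)

theorem lipschitzWith_boxClamp [Fintype ι] (S : ℝ) :
    LipschitzWith 1 (boxClamp S : (ι → ℝ) → ι → ℝ) :=
  LipschitzWith.of_dist_le_mul fun x y ↦ (dist_pi_le_iff (by positivity)).2 fun i ↦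
    (((LipschitzWith.id.min_const S).const_max 0).dist_le_mul (x i) (y i)).trans
      (mul_le_mul_of_nonneg_left (dist_le_pi_dist x y i) zero_le_one)

theorem boxClamp_nonneg (S : ℝ) (x : ι → ℝ) : 0 ≤ boxClamp S x := fun _ ↦ le_max_left _ _

theorem boxClamp_mem_Icc {S : ℝ} (hS : 0 ≤ S) (x : ι → ℝ) :
    boxClamp S x ∈ Icc 0 fun _ ↦ S :=
  ⟨boxClamp_nonneg S x, fun _ ↦ max_le hS (min_le_right _ _)⟩

theorem boxClamp_apply_eq_zero_of_neg {S : ℝ} {x : ι → ℝ} {i : ι} (hx : x i < 0) :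
    boxClamp S x i = 0 :=
  max_eq_left ((min_le_left _ _).trans hx.le)

theorem boxClamp_eq_self {S : ℝ} {x : ι → ℝ} (hx : x ∈ Icc 0 fun _ ↦ S) : boxClamp S x = x :=
  funext fun i ↦ by rw [boxClamp, min_eq_left (hx.2 i), max_eq_right (by exact hx.1 i)]

end BoxClamp

theorem nonneg_of_hasDerivWithinAt_of_neg {g g' : ℝ → ℝ}
    (hg : ∀ t, 0 ≤ t → HasDerivWithinAt g (g' t) (Ici 0) t) (h0 : 0 ≤ g 0)
    (hg' : ∀ t, 0 < t → g t < 0 → 0 ≤ g' t) {t : ℝ} (ht : 0 ≤ t) : 0 ≤ g t := by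
  have hcont : ContinuousOn g (Icc 0 t) := fun s hs ↦
    ((hg s hs.1).continuousWithinAt).mono Icc_subset_Ici_self
  set A := Icc 0 t ∩ g ⁻¹' Ici 0
  have hA : IsCompact A := isCompact_Icc.of_isClosed_subset
    (hcont.preimage_isClosed_of_isClosed isClosed_Icc isClosed_Ici) inter_subset_left
  obtain ⟨⟨hs0, hst⟩, hgs⟩ : sSup A ∈ A := hA.sSup_mem ⟨0, ⟨le_rfl, ht⟩, h0⟩
  set s := sSup A
  have hneg : ∀ r ∈ Ioo s t, g r < 0 := fun r hr ↦ by
    by_contra! h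
    exact (le_csSup hA.bddAbove ⟨⟨hs0.trans hr.1.le, hr.2.le⟩, h⟩).not_gt hr.1
  have hmono : MonotoneOn g (Icc s t) := by
    refine monotoneOn_of_hasDerivWithinAt_nonneg (f' := g') (convex_Icc s t)
      (hcont.mono (Icc_subset_Icc_left hs0)) (fun r hr ↦ ?_) (fun r hr ↦ ?_)
    · rw [interior_Icc] at hr ⊢
      exact (hg r (hs0.trans hr.1.le)).mono fun u hu ↦ hs0.trans hu.1.le
    · rw [interior_Icc] at hr
      exact hg' r (hs0.trans_lt hr.1) (hneg r hr)
  exact hgs.trans (hmono ⟨le_rfl, hst⟩ ⟨hst, le_rfl⟩ hst)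

namespace RBK

variable (a : ℕ → ℕ → ℝ) (N : ℕ)

def rhs (y : ℕ → ℝ) (j : ℕ) : ℝ :=
  (∑ k ∈ Finset.Icc 1 (N - j), a (j + k) k * y (j + k) * y k) -
    ∑ k ∈ Finset.Icc 1 N, a j k * y j * y k

/-- States are indexed by `{1, …, N}`; the RBK right-hand side is written for sequences, so a
state is extended by zero outside `{1, …, N}`. -/
def toSeq (x : Finset.Icc 1 N → ℝ) (m : ℕ) : ℝ :=
  if h : m ∈ Finset.Icc 1 N then x ⟨m, h⟩ else 0

def field (x : Finset.Icc 1 N → ℝ) : Finset.Icc 1 N → ℝ := fun j ↦ rhs a N (toSeq N x) j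

theorem contDiff_field : ContDiff ℝ 1 (field a N) := by
  have hseq : ∀ m, ContDiff ℝ 1 fun x : Finset.Icc 1 N → ℝ ↦ toSeq N x m := fun m ↦ by
    unfold toSeq
    split_ifs
    exacts [contDiff_apply ℝ ℝ _, contDiff_const]
  refine contDiff_pi.2 fun j ↦ ?_
  unfold field rhs
  fun_prop

variable {a N}

theorem toSeq_of_mem (x : Finset.Icc 1 N → ℝ) {j : ℕ} (hj : j ∈ Finset.Icc 1 N) :
    toSeq N x j = x ⟨j, hj⟩ :=
  dif_pos hj

theorem toSeq_nonneg {x : Finset.Icc 1 N → ℝ} (hx : 0 ≤ x) (m : ℕ) : 0 ≤ toSeq N x m := by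
  unfold toSeq
  split_ifs
  exacts [hx _, le_rfl]

theorem rhs_nonneg_of_eq_zero (hpos : ∀ j k : ℕ, 1 ≤ j → 1 ≤ k → 0 ≤ a j k) {y : ℕ → ℝ}
    (hy : ∀ m, 0 ≤ y m) {j : ℕ} (hj : 1 ≤ j) (hyj : y j = 0) : 0 ≤ rhs a N y j := by
  have hloss : ∑ k ∈ Finset.Icc 1 N, a j k * y j * y k = 0 :=
    Finset.sum_eq_zero fun k _ ↦ by rw [hyj, mul_zero, zero_mul]
  rw [rhs, hloss, sub_zero]
  refine Finset.sum_nonneg fun k hk ↦ ?_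
  have hk1 := (Finset.mem_Icc.1 hk).1
  exact mul_nonneg (mul_nonneg (hpos _ _ (by omega) hk1) (hy _)) (hy _)

theorem sum_rhs_nonpos (hpos : ∀ j k : ℕ, 1 ≤ j → 1 ≤ k → 0 ≤ a j k) {y : ℕ → ℝ}
    (hy : ∀ m, 0 ≤ y m) : ∑ j ∈ Finset.Icc 1 N, rhs a N y j ≤ 0 := by
  set f : ℕ → ℕ → ℝ := fun p k ↦ a p k * y p * y k
  have hf : ∀ p ∈ Finset.Icc 1 N, ∀ k ∈ Finset.Icc 1 N, 0 ≤ f p k := fun p hp k hk ↦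
    mul_nonneg (mul_nonneg (hpos _ _ (Finset.mem_Icc.1 hp).1 (Finset.mem_Icc.1 hk).1) (hy _))
      (hy _)
  have hgain : ∑ j ∈ Finset.Icc 1 N, ∑ k ∈ Finset.Icc 1 (N - j), f (j + k) k
      = ∑ k ∈ Finset.Icc 1 N, ∑ j ∈ Finset.Icc 1 (N - k), f (j + k) k :=
    Finset.sum_comm' fun j k ↦ by simp only [Finset.mem_Icc]; omega
  have hshift : ∀ k ∈ Finset.Icc 1 N, ∑ j ∈ Finset.Icc 1 (N - k), f (j + k) k
      ≤ ∑ p ∈ Finset.Icc 1 N, f p k := fun k hk ↦ by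
    calc ∑ j ∈ Finset.Icc 1 (N - k), f (j + k) k
        = ∑ p ∈ Finset.Icc (1 + k) (N - k + k), f p k := by
          rw [← Finset.map_add_right_Icc, Finset.sum_map]; rfl
      _ ≤ ∑ p ∈ Finset.Icc 1 N, f p k := by
        refine Finset.sum_le_sum_of_subset_of_nonneg (fun p ↦ ?_) fun p hp _ ↦ hf p hp k hk
        simp only [Finset.mem_Icc] at hk ⊢
        omega
  unfold rhs
  rw [Finset.sum_sub_distrib, sub_nonpos]
  calc ∑ j ∈ Finset.Icc 1 N, ∑ k ∈ Finset.Icc 1 (N - j), f (j + k) k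
      ≤ ∑ k ∈ Finset.Icc 1 N, ∑ p ∈ Finset.Icc 1 N, f p k := hgain ▸ Finset.sum_le_sum hshift
    _ = ∑ j ∈ Finset.Icc 1 N, ∑ k ∈ Finset.Icc 1 N, f j k := Finset.sum_comm

section TruncatedSolution

variable {S : ℝ} {x : ℝ → Finset.Icc 1 N → ℝ}
  (hpos : ∀ j k : ℕ, 1 ≤ j → 1 ≤ k → 0 ≤ a j k)
  (hx : ∀ t, 0 ≤ t → HasDerivWithinAt x (field a N (boxClamp S (x t))) (Ici 0) t)
include hpos hx

theorem nonneg_of_hasDerivWithinAt_field_boxClamp (hx0 : 0 ≤ x 0) {t : ℝ} (ht : 0 ≤ t) :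
    0 ≤ x t := fun i ↦ by
  refine nonneg_of_hasDerivWithinAt_of_neg (fun s hs ↦ hasDerivWithinAt_pi.1 (hx s hs) i)
    (hx0 i) (fun s _ hneg ↦ ?_) ht
  refine rhs_nonneg_of_eq_zero hpos (toSeq_nonneg (boxClamp_nonneg S _))
    (Finset.mem_Icc.1 i.2).1 ?_
  rw [toSeq_of_mem _ i.2]
  exact boxClamp_apply_eq_zero_of_neg hneg

theorem sum_le_of_hasDerivWithinAt_field_boxClamp {t : ℝ} (ht : 0 ≤ t) :
    ∑ i, x t i ≤ ∑ i, x 0 i := by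
  have hderiv : ∀ s, 0 ≤ s → HasDerivWithinAt (fun s ↦ ∑ i, x s i)
      (∑ i, field a N (boxClamp S (x s)) i) (Ici 0) s := fun s hs ↦
    HasDerivWithinAt.fun_sum fun i _ ↦ hasDerivWithinAt_pi.1 (hx s hs) i
  have hanti : AntitoneOn (fun s ↦ ∑ i, x s i) (Ici 0) := by
    refine antitoneOn_of_hasDerivWithinAt_nonpos
      (f' := fun s ↦ ∑ i, field a N (boxClamp S (x s)) i) (convex_Ici 0)
      (fun s hs ↦ (hderiv s hs).continuousWithinAt) (fun s hs ↦ ?_) (fun s _ ↦ ?_)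
    · rw [interior_Ici] at hs ⊢
      exact (hderiv s (le_of_lt hs)).mono Ioi_subset_Ici_self
    · exact (Finset.sum_coe_sort _ _).trans_le
        (sum_rhs_nonpos hpos (toSeq_nonneg (boxClamp_nonneg S _)))
  exact hanti (mem_Ici.2 le_rfl) ht ht

theorem boxClamp_eq_of_hasDerivWithinAt_field_boxClamp (hx0 : 0 ≤ x 0) (hS : ∑ i, x 0 i ≤ S)
    {t : ℝ} (ht : 0 ≤ t) : boxClamp S (x t) = x t := by
  have hnonneg := nonneg_of_hasDerivWithinAt_field_boxClamp hpos hx hx0 ht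
  refine boxClamp_eq_self ⟨hnonneg, fun i ↦ ?_⟩
  calc x t i ≤ ∑ i, x t i := Finset.single_le_sum (fun j _ ↦ hnonneg j) (Finset.mem_univ i)
    _ ≤ ∑ i, x 0 i := sum_le_of_hasDerivWithinAt_field_boxClamp hpos hx ht
    _ ≤ S := hS

end TruncatedSolution

end RBK

open RBK in
theorem rbk_finite_global_existence_general
    (a : ℕ → ℕ → ℝ)
    (hpos : ∀ j k : ℕ, 1 ≤ j → 1 ≤ k → 0 ≤ a j k)
    (N : ℕ)
    (c0 : ℕ → ℝ) (hc0 : ∀ j ∈ Finset.Icc 1 N, 0 ≤ c0 j) :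
    ∃ c : ℝ → ℕ → ℝ,
      (∀ j ∈ Finset.Icc 1 N, c 0 j = c0 j) ∧
      (∀ j ∈ Finset.Icc 1 N, ∀ t : ℝ, 0 ≤ t →
        HasDerivWithinAt (fun s => c s j)
          ((∑ k ∈ Finset.Icc 1 (N - j), a (j + k) k * c t (j + k) * c t k) -
           (∑ k ∈ Finset.Icc 1 N, a j k * c t j * c t k)) (Set.Ici 0) t) ∧
      (∀ j ∈ Finset.Icc 1 N,
        ContinuousOn (fun t =>
          (∑ k ∈ Finset.Icc 1 (N - j), a (j + k) k * c t (j + k) * c t k) -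
          (∑ k ∈ Finset.Icc 1 N, a j k * c t j * c t k)) (Set.Ici 0)) ∧
      (∀ j ∈ Finset.Icc 1 N, ∀ t : ℝ, 0 ≤ t → 0 ≤ c t j) := by
  set S := ∑ j ∈ Finset.Icc 1 N, c0 j
  have hS : 0 ≤ S := Finset.sum_nonneg hc0
  obtain ⟨K, hK⟩ := (contDiff_field a N).locallyLipschitz.exists_lipschitzWith_comp
    (lipschitzWith_boxClamp S) isCompact_Icc (boxClamp_mem_Icc hS)
  obtain ⟨C, hC⟩ := isCompact_Icc.exists_bound_of_continuousOn
    (contDiff_field a N).continuous.continuousOn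
  obtain ⟨x, hx0, hx⟩ := exists_forall_hasDerivWithinAt_Ici_of_lipschitzWith_of_norm_le hK
    (fun y ↦ hC _ (boxClamp_mem_Icc hS y)) fun j : Finset.Icc 1 N ↦ c0 j
  replace hx : ∀ t, 0 ≤ t → HasDerivWithinAt x (field a N (boxClamp S (x t))) (Ici 0) t := hx
  have hx0pos : 0 ≤ x 0 := hx0 ▸ fun j ↦ hc0 j j.2
  have hx0sum : ∑ j, x 0 j ≤ S := hx0 ▸ (Finset.sum_coe_sort _ _).le
  have hnonneg t (ht : 0 ≤ t) := nonneg_of_hasDerivWithinAt_field_boxClamp hpos hx hx0pos ht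
  have hclamp t (ht : 0 ≤ t) :=
    boxClamp_eq_of_hasDerivWithinAt_field_boxClamp hpos hx hx0pos hx0sum ht
  refine ⟨fun t ↦ toSeq N (x t), fun j hj ↦ by simp [toSeq_of_mem _ hj, hx0], fun j hj t ht ↦ ?_,
    fun j hj ↦ ?_, fun j _ t ht ↦ toSeq_nonneg (hnonneg t ht) j⟩
  · have hcoord := hasDerivWithinAt_pi.1 (hx t ht) ⟨j, hj⟩
    rw [hclamp t ht] at hcoord
    show HasDerivWithinAt (fun s ↦ toSeq N (x s) j) (field a N (x t) ⟨j, hj⟩) (Ici 0) t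
    simp only [toSeq_of_mem _ hj]
    exact hcoord
  · refine ContinuousOn.congr (f := fun t ↦ field a N (x t) ⟨j, hj⟩) ?_ fun t _ ↦ rfl
    have hxc : ContinuousOn x (Ici 0) := fun t ht ↦ (hx t ht).continuousWithinAt
    exact (continuous_apply (⟨j, hj⟩ : Finset.Icc 1 N)).comp_continuousOn
      ((contDiff_field a N).continuous.comp_continuousOn hxc)

theorem rbk_finite_global_existence
    (a : ℕ → ℕ → ℝ)
    (hsym : ∀ j k : ℕ, 1 ≤ j → 1 ≤ k → a j k = a k j)
    (hpos : ∀ j k : ℕ, 1 ≤ j → 1 ≤ k → 0 ≤ a j k)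
    (N : ℕ) (hN : 1 ≤ N)
    (c0 : ℕ → ℝ) (hc0 : ∀ j ∈ Finset.Icc 1 N, 0 ≤ c0 j) :
    ∃ c : ℝ → ℕ → ℝ,
      (∀ j ∈ Finset.Icc 1 N, c 0 j = c0 j) ∧
      (∀ j ∈ Finset.Icc 1 N, ∀ t : ℝ, 0 ≤ t →
        HasDerivWithinAt (fun s => c s j)
          ((∑ k ∈ Finset.Icc 1 (N - j), a (j + k) k * c t (j + k) * c t k) -
           (∑ k ∈ Finset.Icc 1 N, a j k * c t j * c t k)) (Set.Ici 0) t) ∧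
      (∀ j ∈ Finset.Icc 1 N,
        ContinuousOn (fun t =>
          (∑ k ∈ Finset.Icc 1 (N - j), a (j + k) k * c t (j + k) * c t k) -
          (∑ k ∈ Finset.Icc 1 N, a j k * c t j * c t k)) (Set.Ici 0)) ∧
      (∀ j ∈ Finset.Icc 1 N, ∀ t : ℝ, 0 ≤ t → 0 ≤ c t j) :=
  rbk_finite_global_existence_general a hpos N c0 hc0
end

section
/- Assume a_{j,k} ≤ K·j·k for some constant K > 0 and all j,k ∈ ℕ. Then every mild solution c of the RBK system on [0,T) is density nonincreasing, i.e. Σ_{j≥1} j c_j(t₂) ≤ Σ_{j≥1} j c_j(t₁) whenever 0 ≤ t₁ ≤ t₂ < T. -/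
open MeasureTheory Filter Topology
open scoped ENNReal

/-- Membership in `X₁⁺`: sequences `(c_j)_{j≥1}` (encoded as `c (j+1)` for `j : ℕ`)
with nonnegative entries and `Σ_{j≥1} j c_j < ∞`. -/
def MemX1plus (c : ℕ → ℝ) : Prop :=
  (∀ j : ℕ, 0 ≤ c (j + 1)) ∧ Summable (fun j : ℕ => ((j : ℝ) + 1) * c (j + 1))

/-- The norm `‖c‖₁ = Σ_{j≥1} j c_j`. -/
noncomputable def norm1 (c : ℕ → ℝ) : ℝ := ∑' j : ℕ, ((j : ℝ) + 1) * c (j + 1)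

/-- A (mild) solution of the RBK coagulation system on `[0,T)`, `T ∈ (0,∞]`:
(i) each `c_j` is continuous, `c(t) ∈ X₁⁺` and `sup_t ‖c(t)‖₁ < ∞`;
(ii) for each `j` the loss series is summable and `∫₀ᵗ Σ_k a_{j,k} c_k < ∞`;
(iii) `c_j(t) = c_j(0) + ∫₀ᵗ [Σ_k a_{j+k,k} c_{j+k} c_k − Σ_k a_{j,k} c_j c_k] ds`. -/
structure IsMildSolution (a : ℕ → ℕ → ℝ) (T : ℝ≥0∞) (c : ℝ → ℕ → ℝ) : Prop where
  mem : ∀ t : ℝ, 0 ≤ t → ENNReal.ofReal t < T → MemX1plus (c t)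
  cont : ∀ j : ℕ, ContinuousOn (fun t => c t (j + 1))
      {t : ℝ | 0 ≤ t ∧ ENNReal.ofReal t < T}
  bdd : ∃ B : ℝ, ∀ t : ℝ, 0 ≤ t → ENNReal.ofReal t < T → norm1 (c t) ≤ B
  loss_summable : ∀ (j : ℕ) (s : ℝ), 0 ≤ s → ENNReal.ofReal s < T →
      Summable (fun k : ℕ => a (j + 1) (k + 1) * c s (k + 1))
  loss_integrable : ∀ (j : ℕ) (t : ℝ), 0 ≤ t → ENNReal.ofReal t < T →
      IntervalIntegrable (fun s => ∑' k : ℕ, a (j + 1) (k + 1) * c s (k + 1)) volume 0 t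
  eqn : ∀ (j : ℕ) (t : ℝ), 0 ≤ t → ENNReal.ofReal t < T →
      c t (j + 1) = c 0 (j + 1) + ∫ s in (0:ℝ)..t,
        ((∑' k : ℕ, a (j + 1 + (k + 1)) (k + 1) * c s (j + 1 + (k + 1)) * c s (k + 1)) -
         (∑' k : ℕ, a (j + 1) (k + 1) * c s (j + 1) * c s (k + 1)))

/-!
Truncate the density with the weights `w_j = min (j, n)` (`min (j + 1) n` for the entry
`c (j + 1)`). Multiplying the mild equation for `c_j` by `w_j` and summing over `j` in `ℝ≥0∞`,
where sums and integrals commute without any summability bookkeeping, gives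
`Σ w_j c_j(t₂) + ∫ Σ w_j loss_j = Σ w_j c_j(t₁) + ∫ Σ w_j gain_j` on `[t₁, t₂]`.
Each term `a_{j+k,k} c_{j+k} c_k` of `gain_j` is also a term of `loss_{j+k}`, where it carries the
larger weight `w_{j+k} ≥ w_j`; hence `Σ w_j gain_j ≤ Σ w_j loss_j` pointwise in time. Since `w ≤ n`
and `a_{j,k} ≤ K j k`, the loss integral is finite and can be cancelled, so
`Σ w_j c_j(t₂) ≤ Σ w_j c_j(t₁)`; letting `n → ∞` gives the claim.
-/

theorem ENNReal.tsum_tsum_mul_shift_le {W : ℕ → ℝ≥0∞} (hW : Monotone W) (u : ℕ → ℕ → ℝ≥0∞) :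
    ∑' (j : ℕ) (k : ℕ), W j * u (j + k + 1) k ≤ ∑' (j : ℕ) (k : ℕ), W j * u j k := by
  have hinj : Function.Injective fun p : ℕ × ℕ => (p.1 + p.2 + 1, p.2) := by
    intro p q h
    simp only [Prod.mk.injEq] at h
    ext <;> omega
  calc ∑' (j : ℕ) (k : ℕ), W j * u (j + k + 1) k
      ≤ ∑' (j : ℕ) (k : ℕ), W (j + k + 1) * u (j + k + 1) k := by
        gcongr with j k
        exact hW (by omega)
    _ = ∑' p : ℕ × ℕ, W (p.1 + p.2 + 1) * u (p.1 + p.2 + 1) p.2 :=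
        (ENNReal.tsum_prod' (f := fun p : ℕ × ℕ => W (p.1 + p.2 + 1) * u (p.1 + p.2 + 1) p.2)).symm
    _ ≤ ∑' q : ℕ × ℕ, W q.1 * u q.1 q.2 :=
        ENNReal.tsum_comp_le_tsum_of_injective hinj fun q => W q.1 * u q.1 q.2
    _ = ∑' (j : ℕ) (k : ℕ), W j * u j k := ENNReal.tsum_prod'

theorem ENNReal.tsum_succ_mul_le_of_forall_min_mul_le {x y : ℕ → ℝ≥0∞}
    (h : ∀ n : ℕ,
      ∑' j : ℕ, min ((j : ℝ≥0∞) + 1) n * x j ≤ ∑' j : ℕ, min ((j : ℝ≥0∞) + 1) n * y j) :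
    ∑' j : ℕ, ((j : ℝ≥0∞) + 1) * x j ≤ ∑' j : ℕ, ((j : ℝ≥0∞) + 1) * y j := by
  refine ENNReal.tsum_le_of_sum_range_le fun n => ?_
  calc ∑ j ∈ Finset.range n, ((j : ℝ≥0∞) + 1) * x j
      = ∑ j ∈ Finset.range n, min ((j : ℝ≥0∞) + 1) n * x j := by
        refine Finset.sum_congr rfl fun j hj => ?_
        rw [min_eq_left]
        exact_mod_cast Finset.mem_range.1 hj
    _ ≤ ∑' j : ℕ, min ((j : ℝ≥0∞) + 1) n * x j := ENNReal.sum_le_tsum _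
    _ ≤ ∑' j : ℕ, min ((j : ℝ≥0∞) + 1) n * y j := h n
    _ ≤ ∑' j : ℕ, ((j : ℝ≥0∞) + 1) * y j := by
        gcongr with j
        exact min_le_left _ _

section Measure

variable {α : Type*} [MeasurableSpace α] {μ : Measure α}

theorem tsum_mul_lintegral_eq {f : ℕ → α → ℝ≥0∞} (hf : ∀ j, AEMeasurable (f j) μ)
    (w : ℕ → ℝ≥0∞) :
    ∑' j, w j * ∫⁻ a, f j a ∂μ = ∫⁻ a, ∑' j, w j * f j a ∂μ := by
  rw [lintegral_tsum fun j => (hf j).const_mul (w j)]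
  exact tsum_congr fun j => (lintegral_const_mul'' (w j) (hf j)).symm

theorem tsum_mul_le_of_balance {w x y : ℕ → ℝ≥0∞} {g ℓ : ℕ → α → ℝ≥0∞}
    (hg : ∀ j, AEMeasurable (g j) μ) (hℓ : ∀ j, AEMeasurable (ℓ j) μ)
    (hbal : ∀ j, x j + ∫⁻ a, ℓ j a ∂μ = y j + ∫⁻ a, g j a ∂μ)
    (hgℓ : ∀ᵐ a ∂μ, ∑' j, w j * g j a ≤ ∑' j, w j * ℓ j a)
    (hfin : ∫⁻ a, ∑' j, w j * ℓ j a ∂μ ≠ ∞) :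
    ∑' j, w j * x j ≤ ∑' j, w j * y j := by
  refine ENNReal.le_of_add_le_add_right hfin ?_
  calc ∑' j, w j * x j + ∫⁻ a, ∑' j, w j * ℓ j a ∂μ
      = ∑' j, w j * (y j + ∫⁻ a, g j a ∂μ) := by
        simp_rw [← hbal, mul_add]
        rw [ENNReal.tsum_add, tsum_mul_lintegral_eq hℓ]
    _ = ∑' j, w j * y j + ∫⁻ a, ∑' j, w j * g j a ∂μ := by
        simp_rw [mul_add]
        rw [ENNReal.tsum_add, tsum_mul_lintegral_eq hg]
    _ ≤ ∑' j, w j * y j + ∫⁻ a, ∑' j, w j * ℓ j a ∂μ := by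
        gcongr _ + ?_
        exact lintegral_mono_ae hgℓ

theorem aestronglyMeasurable_tsum {E : Type*} [NormedAddCommGroup E] {f : ℕ → α → E}
    (hf : ∀ k, AEStronglyMeasurable (f k) μ) (hs : ∀ᵐ a ∂μ, Summable fun k => f k a) :
    AEStronglyMeasurable (fun a => ∑' k, f k a) μ :=
  aestronglyMeasurable_of_tendsto_ae atTop
    (fun _ => Finset.aestronglyMeasurable_fun_sum _ fun k _ => hf k)
    (hs.mono fun _ ha => ha.hasSum.tendsto_sum_nat)

end Measure

namespace MemX1plus

variable {c : ℕ → ℝ}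

theorem norm1_nonneg (hc : MemX1plus c) : 0 ≤ norm1 c :=
  tsum_nonneg fun j => mul_nonneg (by positivity) (hc.1 j)

theorem succ_mul_le_norm1 (hc : MemX1plus c) (j : ℕ) : ((j : ℝ) + 1) * c (j + 1) ≤ norm1 c :=
  hc.2.le_tsum j fun k _ => mul_nonneg (by positivity) (hc.1 k)

theorem ofReal_norm1 (hc : MemX1plus c) :
    ENNReal.ofReal (norm1 c) = ∑' j : ℕ, ((j : ℝ≥0∞) + 1) * ENNReal.ofReal (c (j + 1)) := by
  rw [norm1, ENNReal.ofReal_tsum_of_nonneg (fun j => mul_nonneg (by positivity) (hc.1 j)) hc.2]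
  refine tsum_congr fun j => ?_
  rw [ENNReal.ofReal_mul (by positivity)]
  norm_cast

end MemX1plus

structure KernelBound (a : ℕ → ℕ → ℝ) (K : ℝ) : Prop where
  nonneg : ∀ j k : ℕ, 0 ≤ a (j + 1) (k + 1)
  le_mul : ∀ j k : ℕ, a (j + 1) (k + 1) ≤ K * ((j : ℝ) + 1) * ((k : ℝ) + 1)

theorem KernelBound.nonneg_const {a : ℕ → ℕ → ℝ} {K : ℝ} (ha : KernelBound a K) : 0 ≤ K := by
  simpa using (ha.nonneg 0 0).trans (ha.le_mul 0 0)

/-- `rbkGain a c j` and `rbkLoss a c j` are the two sums in the equation for `c_{j+1}` in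
`IsMildSolution.eqn`. -/
noncomputable def rbkGain (a : ℕ → ℕ → ℝ) (c : ℕ → ℝ) (j : ℕ) : ℝ :=
  ∑' k : ℕ, a (j + 1 + (k + 1)) (k + 1) * c (j + 1 + (k + 1)) * c (k + 1)

noncomputable def rbkLoss (a : ℕ → ℕ → ℝ) (c : ℕ → ℝ) (j : ℕ) : ℝ :=
  ∑' k : ℕ, a (j + 1) (k + 1) * c (j + 1) * c (k + 1)

noncomputable def rbkLossRate (a : ℕ → ℕ → ℝ) (c : ℕ → ℝ) (j : ℕ) : ℝ :=
  ∑' k : ℕ, a (j + 1) (k + 1) * c (k + 1)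

section Pointwise

variable {a : ℕ → ℕ → ℝ} {K : ℝ} {c : ℕ → ℝ}

theorem rbkLoss_eq_mul_rbkLossRate (j : ℕ) : rbkLoss a c j = c (j + 1) * rbkLossRate a c j := by
  rw [rbkLoss, rbkLossRate, ← tsum_mul_left]
  exact tsum_congr fun k => by ring

theorem rbkGain_nonneg (ha : KernelBound a K) (hc : MemX1plus c) (j : ℕ) :
    0 ≤ rbkGain a c j :=
  tsum_nonneg fun k => mul_nonneg (mul_nonneg (ha.nonneg _ k) (hc.1 _)) (hc.1 k)

theorem rbkLoss_nonneg (ha : KernelBound a K) (hc : MemX1plus c) (j : ℕ) :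
    0 ≤ rbkLoss a c j :=
  tsum_nonneg fun k => mul_nonneg (mul_nonneg (ha.nonneg j k) (hc.1 j)) (hc.1 k)

theorem rbkLossRate_term_le (ha : KernelBound a K) (hc : MemX1plus c) (j k : ℕ) :
    a (j + 1) (k + 1) * c (k + 1) ≤ K * ((j : ℝ) + 1) * (((k : ℝ) + 1) * c (k + 1)) := by
  rw [← mul_assoc]
  exact mul_le_mul_of_nonneg_right (ha.le_mul j k) (hc.1 k)

theorem summable_rbkLossRate_terms (ha : KernelBound a K) (hc : MemX1plus c) (j : ℕ) :
    Summable fun k : ℕ => a (j + 1) (k + 1) * c (k + 1) :=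
  (hc.2.mul_left _).of_nonneg_of_le (fun k => mul_nonneg (ha.nonneg j k) (hc.1 k))
    (rbkLossRate_term_le ha hc j)

theorem rbkLossRate_le (ha : KernelBound a K) (hc : MemX1plus c) (j : ℕ) :
    rbkLossRate a c j ≤ K * ((j : ℝ) + 1) * norm1 c := by
  rw [rbkLossRate, norm1, ← tsum_mul_left]
  exact (summable_rbkLossRate_terms ha hc j).tsum_le_tsum (rbkLossRate_term_le ha hc j)
    (hc.2.mul_left _)

theorem rbkGain_term_le (ha : KernelBound a K) (hc : MemX1plus c) (j k : ℕ) :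
    a (j + 1 + (k + 1)) (k + 1) * c (j + 1 + (k + 1)) * c (k + 1)
      ≤ K * norm1 c * (((k : ℝ) + 1) * c (k + 1)) :=
  calc a (j + 1 + (k + 1)) (k + 1) * c (j + 1 + (k + 1)) * c (k + 1)
      ≤ K * (((j + 1 + k : ℕ) : ℝ) + 1) * ((k : ℝ) + 1) * c (j + 1 + (k + 1)) * c (k + 1) :=
        mul_le_mul_of_nonneg_right
          (mul_le_mul_of_nonneg_right (ha.le_mul (j + 1 + k) k) (hc.1 _)) (hc.1 k)
    _ = K * ((((j + 1 + k : ℕ) : ℝ) + 1) * c (j + 1 + (k + 1))) * (((k : ℝ) + 1) * c (k + 1)) := by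
        ring
    _ ≤ K * norm1 c * (((k : ℝ) + 1) * c (k + 1)) := by
        have := ha.nonneg_const
        gcongr
        · exact mul_nonneg (by positivity) (hc.1 k)
        · exact hc.succ_mul_le_norm1 (j + 1 + k)

theorem summable_rbkGain_terms (ha : KernelBound a K) (hc : MemX1plus c) (j : ℕ) :
    Summable fun k : ℕ => a (j + 1 + (k + 1)) (k + 1) * c (j + 1 + (k + 1)) * c (k + 1) :=
  (hc.2.mul_left _).of_nonneg_of_le
    (fun k => mul_nonneg (mul_nonneg (ha.nonneg _ k) (hc.1 _)) (hc.1 k)) (rbkGain_term_le ha hc j)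

theorem rbkGain_le (ha : KernelBound a K) (hc : MemX1plus c) (j : ℕ) :
    rbkGain a c j ≤ K * norm1 c ^ 2 := by
  rw [sq, ← mul_assoc, norm1, ← tsum_mul_left, ← norm1]
  exact (summable_rbkGain_terms ha hc j).tsum_le_tsum (rbkGain_term_le ha hc j)
    (hc.2.mul_left _)

theorem ofReal_rbkGain (ha : KernelBound a K) (hc : MemX1plus c) (j : ℕ) :
    ENNReal.ofReal (rbkGain a c j)
      = ∑' k : ℕ, ENNReal.ofReal (a (j + k + 1 + 1) (k + 1) * c (j + k + 1 + 1) * c (k + 1)) := by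
  rw [rbkGain, ENNReal.ofReal_tsum_of_nonneg (fun k => ?_) (summable_rbkGain_terms ha hc j)]
  · refine tsum_congr fun k => ?_
    rw [show j + 1 + (k + 1) = j + k + 1 + 1 by omega]
  · exact mul_nonneg (mul_nonneg (ha.nonneg _ k) (hc.1 _)) (hc.1 k)

theorem ofReal_rbkLoss (ha : KernelBound a K) (hc : MemX1plus c) (j : ℕ) :
    ENNReal.ofReal (rbkLoss a c j)
      = ∑' k : ℕ, ENNReal.ofReal (a (j + 1) (k + 1) * c (j + 1) * c (k + 1)) := by
  refine ENNReal.ofReal_tsum_of_nonneg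
    (fun k => mul_nonneg (mul_nonneg (ha.nonneg j k) (hc.1 j)) (hc.1 k)) ?_
  exact ((summable_rbkLossRate_terms ha hc j).mul_left (c (j + 1))).congr fun k => by ring

theorem tsum_mul_ofReal_rbkGain_le (ha : KernelBound a K) (hc : MemX1plus c) {W : ℕ → ℝ≥0∞}
    (hW : Monotone W) :
    ∑' j : ℕ, W j * ENNReal.ofReal (rbkGain a c j)
      ≤ ∑' j : ℕ, W j * ENNReal.ofReal (rbkLoss a c j) := by
  simp_rw [ofReal_rbkGain ha hc, ofReal_rbkLoss ha hc, ← ENNReal.tsum_mul_left]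
  exact ENNReal.tsum_tsum_mul_shift_le hW
    fun m k => ENNReal.ofReal (a (m + 1) (k + 1) * c (m + 1) * c (k + 1))

theorem tsum_ofReal_rbkLoss_le (ha : KernelBound a K) (hc : MemX1plus c) :
    ∑' j : ℕ, ENNReal.ofReal (rbkLoss a c j) ≤ ENNReal.ofReal (K * norm1 c ^ 2) := by
  have hterm : ∀ j : ℕ, rbkLoss a c j ≤ K * norm1 c * (((j : ℝ) + 1) * c (j + 1)) := fun j =>
    calc rbkLoss a c j = c (j + 1) * rbkLossRate a c j := rbkLoss_eq_mul_rbkLossRate j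
      _ ≤ c (j + 1) * (K * ((j : ℝ) + 1) * norm1 c) :=
          mul_le_mul_of_nonneg_left (rbkLossRate_le ha hc j) (hc.1 j)
      _ = K * norm1 c * (((j : ℝ) + 1) * c (j + 1)) := by ring
  have hKc : 0 ≤ K * norm1 c := mul_nonneg ha.nonneg_const hc.norm1_nonneg
  calc ∑' j : ℕ, ENNReal.ofReal (rbkLoss a c j)
      ≤ ∑' j : ℕ, ENNReal.ofReal (K * norm1 c * (((j : ℝ) + 1) * c (j + 1))) :=
        ENNReal.tsum_le_tsum fun j => ENNReal.ofReal_le_ofReal (hterm j)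
    _ = ENNReal.ofReal (K * norm1 c ^ 2) := by
        rw [← ENNReal.ofReal_tsum_of_nonneg
          (fun j => mul_nonneg hKc (mul_nonneg (by positivity) (hc.1 j))) (hc.2.mul_left _),
          tsum_mul_left, ← norm1, sq, mul_assoc]

end Pointwise

theorem Icc_zero_subset_setOf_ofReal_lt {T : ℝ≥0∞} {t : ℝ} (ht : ENNReal.ofReal t < T) :
    Set.Icc 0 t ⊆ {s : ℝ | 0 ≤ s ∧ ENNReal.ofReal s < T} :=
  fun _ hs => ⟨hs.1, (ENNReal.ofReal_le_ofReal hs.2).trans_lt ht⟩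

namespace IsMildSolution

variable {a : ℕ → ℕ → ℝ} {K : ℝ} {T : ℝ≥0∞} {c : ℝ → ℕ → ℝ} {t : ℝ}

theorem memX1plus_of_mem_Icc (hc : IsMildSolution a T c) (ht : ENNReal.ofReal t < T) {s : ℝ}
    (hs : s ∈ Set.Icc 0 t) : MemX1plus (c s) :=
  hc.mem s hs.1 (Icc_zero_subset_setOf_ofReal_lt ht hs).2

theorem integrableOn_rbkLoss (hc : IsMildSolution a T c) (ht₀ : 0 ≤ t)
    (ht : ENNReal.ofReal t < T) (j : ℕ) :
    IntegrableOn (fun s => rbkLoss a (c s) j) (Set.Ioc 0 t) := by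
  have hcont : ContinuousOn (fun s => c s (j + 1)) (Set.uIcc 0 t) := by
    rw [Set.uIcc_of_le ht₀]
    exact (hc.cont j).mono (Icc_zero_subset_setOf_ofReal_lt ht)
  simp_rw [rbkLoss_eq_mul_rbkLossRate]
  exact (intervalIntegrable_iff_integrableOn_Ioc_of_le ht₀).1
    ((hc.loss_integrable j t ht₀ ht).continuousOn_mul hcont)

theorem integrableOn_rbkGain (ha : KernelBound a K) (hc : IsMildSolution a T c)
    (ht : ENNReal.ofReal t < T) (j : ℕ) :
    IntegrableOn (fun s => rbkGain a (c s) j) (Set.Ioc 0 t) := by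
  obtain ⟨B, hB⟩ := hc.bdd
  have hdom : Set.Ioc 0 t ⊆ {s : ℝ | 0 ≤ s ∧ ENNReal.ofReal s < T} :=
    Set.Ioc_subset_Icc_self.trans (Icc_zero_subset_setOf_ofReal_lt ht)
  have hmem : ∀ s ∈ Set.Ioc 0 t, MemX1plus (c s) := fun s hs => hc.mem s (hdom hs).1 (hdom hs).2
  have hterm : ∀ k : ℕ, AEStronglyMeasurable
      (fun s => a (j + 1 + (k + 1)) (k + 1) * c s (j + 1 + (k + 1)) * c s (k + 1))
      (volume.restrict (Set.Ioc 0 t)) := fun k =>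
    (((continuousOn_const.mul (hc.cont (j + 1 + k))).mul (hc.cont k)).mono
      hdom).aestronglyMeasurable measurableSet_Ioc
  refine Integrable.of_bound (aestronglyMeasurable_tsum hterm ?_) (K * B ^ 2) ?_
  all_goals refine (ae_restrict_iff' measurableSet_Ioc).2 (ae_of_all _ fun s hs => ?_)
  · exact summable_rbkGain_terms ha (hmem s hs) j
  · rw [Real.norm_eq_abs, abs_of_nonneg (rbkGain_nonneg ha (hmem s hs) j)]
    calc rbkGain a (c s) j ≤ K * norm1 (c s) ^ 2 := rbkGain_le ha (hmem s hs) j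
      _ ≤ K * B ^ 2 := by
        have := ha.nonneg_const
        gcongr
        · exact (hmem s hs).norm1_nonneg
        · exact hB s (hdom hs).1 (hdom hs).2

theorem ofReal_add_lintegral_rbkLoss (ha : KernelBound a K) (hc : IsMildSolution a T c)
    {t₁ t₂ : ℝ} (h₁ : 0 ≤ t₁) (h₁₂ : t₁ ≤ t₂) (h₂ : ENNReal.ofReal t₂ < T) (j : ℕ) :
    ENNReal.ofReal (c t₂ (j + 1)) + ∫⁻ s in Set.Ioc t₁ t₂, ENNReal.ofReal (rbkLoss a (c s) j)
      = ENNReal.ofReal (c t₁ (j + 1))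
        + ∫⁻ s in Set.Ioc t₁ t₂, ENNReal.ofReal (rbkGain a (c s) j) := by
  have h₁' : ENNReal.ofReal t₁ < T := (ENNReal.ofReal_le_ofReal h₁₂).trans_lt h₂
  have h₂₀ : 0 ≤ t₂ := h₁.trans h₁₂
  have hrate : ∀ t, 0 ≤ t → ENNReal.ofReal t < T →
      IntervalIntegrable (fun s => rbkGain a (c s) j - rbkLoss a (c s) j) volume 0 t :=
    fun t ht₀ ht => (intervalIntegrable_iff_integrableOn_Ioc_of_le ht₀).2
      ((hc.integrableOn_rbkGain ha ht j).sub (hc.integrableOn_rbkLoss ht₀ ht j))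
  have heqn : ∀ t, 0 ≤ t → ENNReal.ofReal t < T → c t (j + 1)
      = c 0 (j + 1) + ∫ s in (0 : ℝ)..t, (rbkGain a (c s) j - rbkLoss a (c s) j) :=
    hc.eqn j
  have hdiff : c t₂ (j + 1) - c t₁ (j + 1)
      = ∫ s in t₁..t₂, (rbkGain a (c s) j - rbkLoss a (c s) j) := by
    rw [heqn t₂ h₂₀ h₂, heqn t₁ h₁ h₁',
      ← intervalIntegral.integral_interval_sub_left (hrate t₂ h₂₀ h₂) (hrate t₁ h₁ h₁')]
    ring
  have hsub : Set.Ioc t₁ t₂ ⊆ Set.Ioc 0 t₂ := Set.Ioc_subset_Ioc_left h₁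
  have hG := (hc.integrableOn_rbkGain ha h₂ j).mono_set hsub
  have hL := (hc.integrableOn_rbkLoss h₂₀ h₂ j).mono_set hsub
  rw [intervalIntegral.integral_of_le h₁₂, integral_sub hG hL] at hdiff
  have hmem : ∀ s ∈ Set.Ioc t₁ t₂, MemX1plus (c s) := fun s hs =>
    hc.memX1plus_of_mem_Icc h₂ ⟨h₁.trans hs.1.le, hs.2⟩
  have hGnn : ∀ s ∈ Set.Ioc t₁ t₂, 0 ≤ rbkGain a (c s) j := fun s hs =>
    rbkGain_nonneg ha (hmem s hs) j
  have hLnn : ∀ s ∈ Set.Ioc t₁ t₂, 0 ≤ rbkLoss a (c s) j := fun s hs =>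
    rbkLoss_nonneg ha (hmem s hs) j
  rw [← ofReal_integral_eq_lintegral_ofReal hL
      ((ae_restrict_iff' measurableSet_Ioc).2 (ae_of_all _ hLnn)),
    ← ofReal_integral_eq_lintegral_ofReal hG
      ((ae_restrict_iff' measurableSet_Ioc).2 (ae_of_all _ hGnn)),
    ← ENNReal.ofReal_add ((hc.mem t₂ h₂₀ h₂).1 j) (setIntegral_nonneg measurableSet_Ioc hLnn),
    ← ENNReal.ofReal_add ((hc.mem t₁ h₁ h₁').1 j) (setIntegral_nonneg measurableSet_Ioc hGnn)]
  congr 1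
  linarith

theorem lintegral_tsum_mul_rbkLoss_ne_top (ha : KernelBound a K) (hc : IsMildSolution a T c)
    {t₁ t₂ : ℝ} (h₁ : 0 ≤ t₁) (h₂ : ENNReal.ofReal t₂ < T) {w : ℕ → ℝ≥0∞} {M : ℝ≥0∞}
    (hw : ∀ j, w j ≤ M) (hM : M ≠ ∞) :
    ∫⁻ s in Set.Ioc t₁ t₂, ∑' j : ℕ, w j * ENNReal.ofReal (rbkLoss a (c s) j) ≠ ∞ := by
  obtain ⟨B, hB⟩ := hc.bdd
  have hbdd : ∀ s ∈ Set.Ioc t₁ t₂,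
      ∑' j : ℕ, w j * ENNReal.ofReal (rbkLoss a (c s) j) ≤ M * ENNReal.ofReal (K * B ^ 2) := by
    intro s hs
    have hs₀ : s ∈ Set.Icc 0 t₂ := ⟨h₁.trans hs.1.le, hs.2⟩
    have hmem := hc.memX1plus_of_mem_Icc h₂ hs₀
    have := ha.nonneg_const
    calc ∑' j : ℕ, w j * ENNReal.ofReal (rbkLoss a (c s) j)
        ≤ ∑' j : ℕ, M * ENNReal.ofReal (rbkLoss a (c s) j) := by gcongr with j; exact hw j
      _ ≤ M * ENNReal.ofReal (K * norm1 (c s) ^ 2) := by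
        rw [ENNReal.tsum_mul_left]
        gcongr
        exact tsum_ofReal_rbkLoss_le ha hmem
      _ ≤ M * ENNReal.ofReal (K * B ^ 2) := by
        gcongr
        · exact hmem.norm1_nonneg
        · exact hB s hs₀.1 (Icc_zero_subset_setOf_ofReal_lt h₂ hs₀).2
  refine ne_top_of_le_ne_top ?_ (setLIntegral_mono' measurableSet_Ioc hbdd)
  rw [setLIntegral_const, Real.volume_Ioc]
  exact ENNReal.mul_ne_top (ENNReal.mul_ne_top hM ENNReal.ofReal_ne_top) ENNReal.ofReal_ne_top

end IsMildSolution

theorem rbk_density_nonincreasing_general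
    (a : ℕ → ℕ → ℝ) (K : ℝ)
    (hpos : ∀ j k : ℕ, 0 ≤ a (j + 1) (k + 1))
    (hbound : ∀ j k : ℕ, a (j + 1) (k + 1) ≤ K * ((j : ℝ) + 1) * ((k : ℝ) + 1))
    (T : ℝ≥0∞) (c : ℝ → ℕ → ℝ) (hc : IsMildSolution a T c)
    (t₁ t₂ : ℝ) (h₁ : 0 ≤ t₁) (h₁₂ : t₁ ≤ t₂) (h₂ : ENNReal.ofReal t₂ < T) :
    norm1 (c t₂) ≤ norm1 (c t₁) := by
  have ha : KernelBound a K := ⟨hpos, hbound⟩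
  have hIoc : Set.Ioc t₁ t₂ ⊆ Set.Ioc 0 t₂ := Set.Ioc_subset_Ioc_left h₁
  have hmem : ∀ s ∈ Set.Icc 0 t₂, MemX1plus (c s) := fun _ => hc.memX1plus_of_mem_Icc h₂
  have hmem₁ := hmem t₁ ⟨h₁, h₁₂⟩
  rw [← ENNReal.ofReal_le_ofReal_iff hmem₁.norm1_nonneg, hmem₁.ofReal_norm1,
    (hmem t₂ ⟨h₁.trans h₁₂, le_rfl⟩).ofReal_norm1]
  refine ENNReal.tsum_succ_mul_le_of_forall_min_mul_le fun n => ?_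
  have hw : Monotone fun j : ℕ => min ((j : ℝ≥0∞) + 1) n := fun i j hij =>
    min_le_min_right _ (by gcongr)
  refine tsum_mul_le_of_balance (μ := volume.restrict (Set.Ioc t₁ t₂))
    (fun j => ((hc.integrableOn_rbkGain ha h₂ j).mono_set hIoc).aemeasurable.ennreal_ofReal)
    (fun j => ((hc.integrableOn_rbkLoss (h₁.trans h₁₂) h₂ j).mono_set
      hIoc).aemeasurable.ennreal_ofReal)
    (hc.ofReal_add_lintegral_rbkLoss ha h₁ h₁₂ h₂) ?_
    (hc.lintegral_tsum_mul_rbkLoss_ne_top ha h₁ h₂ (fun j => min_le_right _ _)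
      (ENNReal.natCast_ne_top n))
  refine (ae_restrict_iff' measurableSet_Ioc).2 (ae_of_all _ fun s hs => ?_)
  exact tsum_mul_ofReal_rbkGain_le ha (hmem s ⟨h₁.trans hs.1.le, hs.2⟩) hw

/-- for `a_{j,k} ≤ K j k`, every mild solution on `[0,T)` is
density nonincreasing: `‖c(t₂)‖₁ ≤ ‖c(t₁)‖₁` for `0 ≤ t₁ ≤ t₂ < T`. -/
theorem rbk_density_nonincreasing
    (a : ℕ → ℕ → ℝ) (K : ℝ) (hK : 0 < K)
    (hsym : ∀ j k : ℕ, a (j + 1) (k + 1) = a (k + 1) (j + 1))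
    (hpos : ∀ j k : ℕ, 0 ≤ a (j + 1) (k + 1))
    (hbound : ∀ j k : ℕ, a (j + 1) (k + 1) ≤ K * ((j : ℝ) + 1) * ((k : ℝ) + 1))
    (T : ℝ≥0∞) (c : ℝ → ℕ → ℝ) (hc : IsMildSolution a T c)
    (t₁ t₂ : ℝ) (h₁ : 0 ≤ t₁) (h₁₂ : t₁ ≤ t₂) (h₂ : ENNReal.ofReal t₂ < T) :
    norm1 (c t₂) ≤ norm1 (c t₁) :=
  rbk_density_nonincreasing_general a K hpos hbound T c hc t₁ t₂ h₁ h₁₂ h₂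
end

section
/- Assume a_{j,k} ≤ K·(j·k)^β for some constant K > 0, some 0 ≤ β ≤ 1/2 and all j,k ∈ ℕ, and let c be a mild solution of the RBK system on [0,T). Then for all 0 ≤ τ ≤ t < T: Σ_{j=1}^∞ c_j(t) − Σ_{j=1}^∞ c_j(τ) = − (1/2) ∫_τ^t Σ_{j=1}^∞ Σ_{k=1}^∞ a_{j,k} c_j(s) c_k(s) ds − (1/2) ∫_τ^t Σ_{j=1}^∞ a_{j,j} c_j(s)² ds. -/
/-!
Summing the mild equations over `j`, the loss terms add up to the full double sum of the
collision rate `F(j, k) = a_{j,k} c_j c_k` and the gain terms to its sum over the strictly lower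
triangle `j > k`. As `F` is symmetric, the full sum is twice the lower triangle plus the diagonal,
which produces the two factors `-1/2`. The bound `a_{j,k} ≤ K (jk)^β ≤ K jk` and
`sup_t ‖c(t)‖₁ < ∞` bound all rates uniformly in time, so the sum over `j` commutes with the time
integral by dominated convergence.
-/

open MeasureTheory Filter Topology
open scoped ENNReal

open Set
open scoped Interval

theorem Function.Injective.hasSum_indicator_range_iff {α β γ : Type*} [AddCommMonoid α]
    [TopologicalSpace α] {f : β → α} {g : γ → β} {a : α} (hg : Function.Injective g) :
    HasSum ((range g).indicator f) a ↔ HasSum (f ∘ g) a :=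
  hasSum_subtype_iff_indicator.symm.trans hg.hasSum_range_iff

section TriangleSplitting

variable {F : ℕ × ℕ → ℝ}

theorem lowerTriangle_injective :
    Function.Injective fun q : ℕ × ℕ => (q.1 + 1 + q.2, q.2) := by
  rintro ⟨i, j⟩ ⟨i', j'⟩ h
  simp only [Prod.mk.injEq] at h
  ext <;> omega

theorem mem_range_lowerTriangle {p : ℕ × ℕ} :
    p ∈ range (fun q : ℕ × ℕ => (q.1 + 1 + q.2, q.2)) ↔ p.2 < p.1 := by
  obtain ⟨i, j⟩ := p
  simp only [mem_range, Prod.mk.injEq, Prod.exists]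
  constructor
  · rintro ⟨m, k, rfl, rfl⟩
    omega
  · exact fun h => ⟨i - 1 - j, j, by omega, rfl⟩

theorem hasSum_two_mul_tsum_lowerTriangle_add_tsum_diag (hF : Summable F)
    (hsymm : ∀ i j, F (i, j) = F (j, i)) :
    HasSum F (2 * ∑' q : ℕ × ℕ, F (q.1 + 1 + q.2, q.2) + ∑' i, F (i, i)) := by
  set L := range fun q : ℕ × ℕ => (q.1 + 1 + q.2, q.2)
  have hlower : HasSum (L.indicator F) (∑' q : ℕ × ℕ, F (q.1 + 1 + q.2, q.2)) :=
    lowerTriangle_injective.hasSum_indicator_range_iff.2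
      (hF.comp_injective lowerTriangle_injective).hasSum
  have hupper : HasSum (fun p : ℕ × ℕ => L.indicator F p.swap)
      (∑' q : ℕ × ℕ, F (q.1 + 1 + q.2, q.2)) :=
    (Equiv.prodComm ℕ ℕ).hasSum_iff.2 hlower
  have hdiag : HasSum ((range Function.diag).indicator F) (∑' i, F (i, i)) :=
    Function.diag_injective.hasSum_indicator_range_iff.2
      (hF.comp_injective Function.diag_injective).hasSum
  convert (hlower.add hupper).add hdiag using 1
  · classical
    ext ⟨i, j⟩
    simp only [indicator_apply, Prod.swap_prod_mk, L, mem_range_lowerTriangle,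
      range_diag, mem_diagonal_iff]
    rcases lt_trichotomy i j with h | rfl | h
    · simp [h, h.ne, h.not_gt, hsymm i j]
    · simp
    · simp [h, h.ne', h.not_gt]
  · ring

theorem hasSum_tsum_lowerTriangle (hF : Summable F) :
    HasSum (fun i => ∑' k, F (i + 1 + k, k)) (∑' q : ℕ × ℕ, F (q.1 + 1 + q.2, q.2)) :=
  (hF.comp_injective lowerTriangle_injective).hasSum.prod_fiberwise fun i =>
    ((hF.comp_injective lowerTriangle_injective).prod_factor i).hasSum

theorem hasSum_tsum_row (hF : Summable F) : HasSum (fun i => ∑' k, F (i, k)) (∑' p, F p) :=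
  hF.hasSum.prod_fiberwise fun i => (hF.prod_factor i).hasSum

theorem hasSum_tsum_lowerTriangle_sub_tsum_row (hF : Summable F)
    (hsymm : ∀ i j, F (i, j) = F (j, i)) :
    HasSum (fun i => ∑' k, F (i + 1 + k, k) - ∑' k, F (i, k))
      (-(1 / 2) * ∑' p, F p - (1 / 2) * ∑' i, F (i, i)) := by
  have hsplit := hF.hasSum.unique (hasSum_two_mul_tsum_lowerTriangle_add_tsum_diag hF hsymm)
  rw [show -(1 / 2) * ∑' p, F p - (1 / 2) * ∑' i, F (i, i) =
      ∑' q : ℕ × ℕ, F (q.1 + 1 + q.2, q.2) - ∑' p, F p by linarith]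
  exact (hasSum_tsum_lowerTriangle hF).sub (hasSum_tsum_row hF)

end TriangleSplitting

theorem aestronglyMeasurable_tsum_s7 {α E : Type*} [MeasurableSpace α] {μ : Measure α}
    [TopologicalSpace E] [AddCommMonoid E] [ContinuousAdd E]
    [TopologicalSpace.PseudoMetrizableSpace E] {g : ℕ → α → E}
    (hg : ∀ n, AEStronglyMeasurable (g n) μ) (hsum : ∀ᵐ x ∂μ, Summable fun n => g n x) :
    AEStronglyMeasurable (fun x => ∑' n, g n x) μ :=
  aestronglyMeasurable_of_tendsto_ae atTop
    (fun N => Finset.aestronglyMeasurable_fun_sum (Finset.range N) fun n _ => hg n)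
    (hsum.mono fun _ hx => hx.hasSum.tendsto_sum_nat)

theorem intervalIntegrable_of_norm_le {E : Type*} [NormedAddCommGroup E] {f : ℝ → E}
    {a b M : ℝ} (hf : AEStronglyMeasurable f (volume.restrict (Ι a b)))
    (hM : ∀ s ∈ Ι a b, ‖f s‖ ≤ M) : IntervalIntegrable f volume a b :=
  intervalIntegrable_const.mono_fun' hf ((ae_restrict_mem measurableSet_uIoc).mono hM)

section CollisionRate

def collisionRate (a : ℕ → ℕ → ℝ) (x : ℕ → ℝ) (p : ℕ × ℕ) : ℝ :=
  a (p.1 + 1) (p.2 + 1) * x (p.1 + 1) * x (p.2 + 1)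

-- Written `j + 1 + k` so that `(j + 1 + k) + 1` is definitionally the index `j + 1 + (k + 1)`
-- appearing in `IsMildSolution.eqn`.
noncomputable def gainRate (a : ℕ → ℕ → ℝ) (x : ℕ → ℝ) (j : ℕ) : ℝ :=
  ∑' k, collisionRate a x (j + 1 + k, k)

noncomputable def lossRate (a : ℕ → ℕ → ℝ) (x : ℕ → ℝ) (j : ℕ) : ℝ :=
  ∑' k, collisionRate a x (j, k)

noncomputable def netRate (a : ℕ → ℕ → ℝ) (x : ℕ → ℝ) (j : ℕ) : ℝ :=
  gainRate a x j - lossRate a x j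

variable {a : ℕ → ℕ → ℝ} {K : ℝ} {x : ℕ → ℝ}

theorem MemX1plus.summable (hx : MemX1plus x) : Summable fun j => x (j + 1) :=
  hx.2.of_nonneg_of_le hx.1 fun j => le_mul_of_one_le_left (hx.1 j) (by simp)

theorem MemX1plus.norm1_nonneg_s7 (hx : MemX1plus x) : 0 ≤ norm1 x :=
  tsum_nonneg fun j => mul_nonneg (by positivity) (hx.1 j)

theorem collisionRate_nonneg (hpos : ∀ j k, 0 ≤ a (j + 1) (k + 1)) (hx : MemX1plus x)
    (p : ℕ × ℕ) : 0 ≤ collisionRate a x p :=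
  mul_nonneg (mul_nonneg (hpos _ _) (hx.1 _)) (hx.1 _)

theorem gainRate_nonneg (hpos : ∀ j k, 0 ≤ a (j + 1) (k + 1)) (hx : MemX1plus x) (j : ℕ) :
    0 ≤ gainRate a x j :=
  tsum_nonneg fun _ => collisionRate_nonneg hpos hx _

theorem lossRate_nonneg (hpos : ∀ j k, 0 ≤ a (j + 1) (k + 1)) (hx : MemX1plus x) (j : ℕ) :
    0 ≤ lossRate a x j :=
  tsum_nonneg fun _ => collisionRate_nonneg hpos hx _

theorem collisionRate_symm (hsym : ∀ j k, a (j + 1) (k + 1) = a (k + 1) (j + 1)) (i j : ℕ) :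
    collisionRate a x (i, j) = collisionRate a x (j, i) := by
  simp only [collisionRate, hsym i j]
  ring

theorem collisionRate_diag (i : ℕ) :
    collisionRate a x (i, i) = a (i + 1) (i + 1) * x (i + 1) ^ 2 := by
  simp only [collisionRate]
  ring

theorem collisionRate_le_mul (hlin : ∀ j k, a (j + 1) (k + 1) ≤ K * (((j : ℝ) + 1) * ((k : ℝ) + 1)))
    (hx : MemX1plus x) (p : ℕ × ℕ) :
    collisionRate a x p ≤ K * ((((p.1 : ℝ) + 1) * x (p.1 + 1)) * (((p.2 : ℝ) + 1) * x (p.2 + 1))) :=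
  calc collisionRate a x p
      ≤ K * (((p.1 : ℝ) + 1) * ((p.2 : ℝ) + 1)) * x (p.1 + 1) * x (p.2 + 1) := by
        unfold collisionRate
        gcongr
        exacts [hx.1 _, hx.1 _, hlin _ _]
    _ = _ := by ring

theorem MemX1plus.summable_collisionRate (hx : MemX1plus x)
    (hpos : ∀ j k, 0 ≤ a (j + 1) (k + 1))
    (hlin : ∀ j k, a (j + 1) (k + 1) ≤ K * (((j : ℝ) + 1) * ((k : ℝ) + 1))) :
    Summable (collisionRate a x) :=
  .of_nonneg_of_le (collisionRate_nonneg hpos hx) (collisionRate_le_mul hlin hx)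
    ((hx.2.mul_of_nonneg hx.2 (fun j => mul_nonneg (by positivity) (hx.1 j))
      (fun j => mul_nonneg (by positivity) (hx.1 j))).mul_left K)

theorem MemX1plus.tsum_collisionRate_le (hx : MemX1plus x)
    (hpos : ∀ j k, 0 ≤ a (j + 1) (k + 1))
    (hlin : ∀ j k, a (j + 1) (k + 1) ≤ K * (((j : ℝ) + 1) * ((k : ℝ) + 1))) :
    ∑' p, collisionRate a x p ≤ K * norm1 x ^ 2 := by
  have hmoment : 0 ≤ fun j : ℕ => ((j : ℝ) + 1) * x (j + 1) :=
    fun j => mul_nonneg (by positivity) (hx.1 j)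
  have hprod := hx.2.mul_of_nonneg hx.2 hmoment hmoment
  calc ∑' p, collisionRate a x p
      ≤ ∑' p : ℕ × ℕ, K * ((((p.1 : ℝ) + 1) * x (p.1 + 1)) * (((p.2 : ℝ) + 1) * x (p.2 + 1))) :=
        (hx.summable_collisionRate hpos hlin).tsum_le_tsum (collisionRate_le_mul hlin hx)
          (hprod.mul_left K)
    _ = K * norm1 x ^ 2 := by
        rw [tsum_mul_left, ← hx.2.tsum_mul_tsum hx.2 hprod, norm1, sq]

theorem hasSum_netRate (hF : Summable (collisionRate a x))
    (hsym : ∀ j k, a (j + 1) (k + 1) = a (k + 1) (j + 1)) :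
    HasSum (netRate a x)
      (-(1 / 2) * ∑' p, collisionRate a x p
        - (1 / 2) * ∑' j, a (j + 1) (j + 1) * x (j + 1) ^ 2) := by
  have h := hasSum_tsum_lowerTriangle_sub_tsum_row hF (collisionRate_symm hsym)
  simp only [collisionRate_diag] at h
  exact h

end CollisionRate

def lifespan (T : ℝ≥0∞) : Set ℝ := {t | 0 ≤ t ∧ ENNReal.ofReal t < T}

section Lifespan

variable {T : ℝ≥0∞} {τ t : ℝ}

theorem zero_mem_lifespan (ht : t ∈ lifespan T) : 0 ∈ lifespan T :=
  ⟨le_rfl, (ENNReal.ofReal_le_ofReal ht.1).trans_lt ht.2⟩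

theorem uIcc_subset_lifespan (hτ : τ ∈ lifespan T) (ht : t ∈ lifespan T) :
    uIcc τ t ⊆ lifespan T := fun s hs =>
  ⟨(le_min hτ.1 ht.1).trans hs.1, (ENNReal.ofReal_le_ofReal hs.2).trans_lt <| by
    rcases le_total τ t with h | h <;> simp [h, hτ.2, ht.2]⟩

theorem uIoc_subset_lifespan (hτ : τ ∈ lifespan T) (ht : t ∈ lifespan T) :
    Ι τ t ⊆ lifespan T :=
  uIoc_subset_uIcc.trans (uIcc_subset_lifespan hτ ht)

end Lifespan

namespace IsMildSolution

variable {a : ℕ → ℕ → ℝ} {K : ℝ} {T : ℝ≥0∞} {c : ℝ → ℕ → ℝ} {τ t : ℝ}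

theorem memX1plus (hc : IsMildSolution a T c) {s : ℝ} (hs : s ∈ lifespan T) :
    MemX1plus (c s) :=
  hc.mem s hs.1 hs.2

theorem aestronglyMeasurable_tsum_collisionRate (hc : IsMildSolution a T c)
    (hpos : ∀ j k, 0 ≤ a (j + 1) (k + 1))
    (hlin : ∀ j k, a (j + 1) (k + 1) ≤ K * (((j : ℝ) + 1) * ((k : ℝ) + 1)))
    {I : Set ℝ} (hI : MeasurableSet I) (hIT : I ⊆ lifespan T)
    {e : ℕ → ℕ × ℕ} (he : Function.Injective e) :
    AEStronglyMeasurable (fun s => ∑' n, collisionRate a (c s) (e n)) (volume.restrict I) :=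
  aestronglyMeasurable_tsum_s7
    (fun n => (((continuousOn_const.mul (hc.cont (e n).1)).mul (hc.cont (e n).2)).mono hIT)
      |>.aestronglyMeasurable hI)
    ((ae_restrict_mem hI).mono fun _ hs =>
      ((hc.memX1plus (hIT hs)).summable_collisionRate hpos hlin).comp_injective he)

theorem exists_tsum_collisionRate_le (hc : IsMildSolution a T c) (hK : 0 ≤ K)
    (hpos : ∀ j k, 0 ≤ a (j + 1) (k + 1))
    (hlin : ∀ j k, a (j + 1) (k + 1) ≤ K * (((j : ℝ) + 1) * ((k : ℝ) + 1))) :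
    ∃ M, ∀ s ∈ lifespan T, ∑' p, collisionRate a (c s) p ≤ M := by
  obtain ⟨B, hB⟩ := hc.bdd
  refine ⟨K * B ^ 2, fun s hs => ?_⟩
  have hx := hc.memX1plus hs
  calc ∑' p, collisionRate a (c s) p ≤ K * norm1 (c s) ^ 2 := hx.tsum_collisionRate_le hpos hlin
    _ ≤ K * B ^ 2 := by
        gcongr
        exacts [hx.norm1_nonneg_s7, hB s hs.1 hs.2]

theorem intervalIntegrable_tsum_collisionRate (hc : IsMildSolution a T c) (hK : 0 ≤ K)
    (hpos : ∀ j k, 0 ≤ a (j + 1) (k + 1))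
    (hlin : ∀ j k, a (j + 1) (k + 1) ≤ K * (((j : ℝ) + 1) * ((k : ℝ) + 1)))
    (hτ : τ ∈ lifespan T) (ht : t ∈ lifespan T) {e : ℕ → ℕ × ℕ} (he : Function.Injective e) :
    IntervalIntegrable (fun s => ∑' n, collisionRate a (c s) (e n)) volume τ t := by
  obtain ⟨M, hM⟩ := hc.exists_tsum_collisionRate_le hK hpos hlin
  have hsub := uIoc_subset_lifespan hτ ht
  refine intervalIntegrable_of_norm_le (M := M)
    (hc.aestronglyMeasurable_tsum_collisionRate hpos hlin measurableSet_uIoc hsub he)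
    fun s hs => ?_
  have hx := hc.memX1plus (hsub hs)
  have hnn := collisionRate_nonneg hpos hx
  rw [Real.norm_of_nonneg (tsum_nonneg fun n => hnn _)]
  exact (tsum_comp_le_tsum_of_inj (hx.summable_collisionRate hpos hlin) hnn he).trans
    (hM s (hsub hs))

theorem intervalIntegrable_gainRate (hc : IsMildSolution a T c) (hK : 0 ≤ K)
    (hpos : ∀ j k, 0 ≤ a (j + 1) (k + 1))
    (hlin : ∀ j k, a (j + 1) (k + 1) ≤ K * (((j : ℝ) + 1) * ((k : ℝ) + 1)))
    (hτ : τ ∈ lifespan T) (ht : t ∈ lifespan T) (j : ℕ) :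
    IntervalIntegrable (fun s => gainRate a (c s) j) volume τ t :=
  hc.intervalIntegrable_tsum_collisionRate hK hpos hlin hτ ht fun _ _ h => congrArg Prod.snd h

theorem intervalIntegrable_lossRate (hc : IsMildSolution a T c) (hK : 0 ≤ K)
    (hpos : ∀ j k, 0 ≤ a (j + 1) (k + 1))
    (hlin : ∀ j k, a (j + 1) (k + 1) ≤ K * (((j : ℝ) + 1) * ((k : ℝ) + 1)))
    (hτ : τ ∈ lifespan T) (ht : t ∈ lifespan T) (j : ℕ) :
    IntervalIntegrable (fun s => lossRate a (c s) j) volume τ t :=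
  hc.intervalIntegrable_tsum_collisionRate hK hpos hlin hτ ht (Prod.mk_right_injective j)

theorem intervalIntegrable_netRate (hc : IsMildSolution a T c) (hK : 0 ≤ K)
    (hpos : ∀ j k, 0 ≤ a (j + 1) (k + 1))
    (hlin : ∀ j k, a (j + 1) (k + 1) ≤ K * (((j : ℝ) + 1) * ((k : ℝ) + 1)))
    (hτ : τ ∈ lifespan T) (ht : t ∈ lifespan T) (j : ℕ) :
    IntervalIntegrable (fun s => netRate a (c s) j) volume τ t :=
  (hc.intervalIntegrable_gainRate hK hpos hlin hτ ht j).sub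
    (hc.intervalIntegrable_lossRate hK hpos hlin hτ ht j)

theorem sub_eq_integral_netRate (hc : IsMildSolution a T c) (hK : 0 ≤ K)
    (hpos : ∀ j k, 0 ≤ a (j + 1) (k + 1))
    (hlin : ∀ j k, a (j + 1) (k + 1) ≤ K * (((j : ℝ) + 1) * ((k : ℝ) + 1)))
    (hτ : τ ∈ lifespan T) (ht : t ∈ lifespan T) (j : ℕ) :
    c t (j + 1) - c τ (j + 1) = ∫ s in τ..t, netRate a (c s) j := by
  have h0 := zero_mem_lifespan ht
  have hc_eq : ∀ s ∈ lifespan T, c s (j + 1) = c 0 (j + 1) + ∫ r in 0..s, netRate a (c r) j :=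
    fun s hs => hc.eqn j s hs.1 hs.2
  rw [hc_eq t ht, hc_eq τ hτ, add_sub_add_left_eq_sub,
    intervalIntegral.integral_interval_sub_left (hc.intervalIntegrable_netRate hK hpos hlin h0 ht j)
      (hc.intervalIntegrable_netRate hK hpos hlin h0 hτ j)]

theorem intervalIntegrable_tsum_gainRate_add_lossRate (hc : IsMildSolution a T c) (hK : 0 ≤ K)
    (hpos : ∀ j k, 0 ≤ a (j + 1) (k + 1))
    (hlin : ∀ j k, a (j + 1) (k + 1) ≤ K * (((j : ℝ) + 1) * ((k : ℝ) + 1)))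
    (hτ : τ ∈ lifespan T) (ht : t ∈ lifespan T) :
    IntervalIntegrable (fun s => ∑' j, (gainRate a (c s) j + lossRate a (c s) j)) volume τ t := by
  obtain ⟨M, hM⟩ := hc.exists_tsum_collisionRate_le hK hpos hlin
  have hsub := uIoc_subset_lifespan hτ ht
  have hsum : ∀ s ∈ lifespan T, HasSum (fun j => gainRate a (c s) j + lossRate a (c s) j)
      (∑' q : ℕ × ℕ, collisionRate a (c s) (q.1 + 1 + q.2, q.2) + ∑' p, collisionRate a (c s) p) :=
    fun s hs =>
      have hF := (hc.memX1plus hs).summable_collisionRate hpos hlin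
      (hasSum_tsum_lowerTriangle hF).add (hasSum_tsum_row hF)
  refine intervalIntegrable_of_norm_le (M := 2 * M)
    (aestronglyMeasurable_tsum_s7 (fun j => intervalIntegrable_iff.1
      ((hc.intervalIntegrable_gainRate hK hpos hlin hτ ht j).add
        (hc.intervalIntegrable_lossRate hK hpos hlin hτ ht j)) |>.aestronglyMeasurable)
      ((ae_restrict_mem measurableSet_uIoc).mono fun s hs => (hsum s (hsub hs)).summable))
    fun s hs => ?_
  have hx := hc.memX1plus (hsub hs)
  have hF := hx.summable_collisionRate hpos hlin
  have hnn := collisionRate_nonneg hpos hx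
  have hlower : ∑' q : ℕ × ℕ, collisionRate a (c s) (q.1 + 1 + q.2, q.2) ≤
      ∑' p, collisionRate a (c s) p :=
    tsum_comp_le_tsum_of_inj hF hnn lowerTriangle_injective
  rw [(hsum s (hsub hs)).tsum_eq, Real.norm_of_nonneg (add_nonneg (tsum_nonneg fun _ => hnn _)
    (tsum_nonneg hnn))]
  linarith [hM s (hsub hs)]

theorem hasSum_integral_netRate (hc : IsMildSolution a T c) (hK : 0 ≤ K)
    (hsym : ∀ j k, a (j + 1) (k + 1) = a (k + 1) (j + 1))
    (hpos : ∀ j k, 0 ≤ a (j + 1) (k + 1))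
    (hlin : ∀ j k, a (j + 1) (k + 1) ≤ K * (((j : ℝ) + 1) * ((k : ℝ) + 1)))
    (hτ : τ ∈ lifespan T) (ht : t ∈ lifespan T) :
    HasSum (fun j => ∫ s in τ..t, netRate a (c s) j)
      (∫ s in τ..t, (-(1 / 2) * ∑' p, collisionRate a (c s) p
        - (1 / 2) * ∑' j, a (j + 1) (j + 1) * c s (j + 1) ^ 2)) := by
  have hsub := uIoc_subset_lifespan hτ ht
  refine intervalIntegral.hasSum_integral_of_dominated_convergence
    (fun j s => gainRate a (c s) j + lossRate a (c s) j)
    (fun j => (intervalIntegrable_iff.1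
      (hc.intervalIntegrable_netRate hK hpos hlin hτ ht j)).aestronglyMeasurable)
    (fun j => .of_forall fun s hs => ?_) (.of_forall fun s hs => ?_)
    (hc.intervalIntegrable_tsum_gainRate_add_lossRate hK hpos hlin hτ ht)
    (.of_forall fun s hs => hasSum_netRate
      ((hc.memX1plus (hsub hs)).summable_collisionRate hpos hlin) hsym)
  · have hx := hc.memX1plus (hsub hs)
    calc ‖netRate a (c s) j‖ ≤ ‖gainRate a (c s) j‖ + ‖lossRate a (c s) j‖ := norm_sub_le _ _
      _ = gainRate a (c s) j + lossRate a (c s) j := by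
        rw [Real.norm_of_nonneg (gainRate_nonneg hpos hx j),
          Real.norm_of_nonneg (lossRate_nonneg hpos hx j)]
  · have hF := (hc.memX1plus (hsub hs)).summable_collisionRate hpos hlin
    exact ((hasSum_tsum_lowerTriangle hF).add (hasSum_tsum_row hF)).summable

theorem tsum_sub_tsum_eq (hc : IsMildSolution a T c) (hK : 0 ≤ K)
    (hsym : ∀ j k, a (j + 1) (k + 1) = a (k + 1) (j + 1))
    (hpos : ∀ j k, 0 ≤ a (j + 1) (k + 1))
    (hlin : ∀ j k, a (j + 1) (k + 1) ≤ K * (((j : ℝ) + 1) * ((k : ℝ) + 1)))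
    (hτ : τ ∈ lifespan T) (ht : t ∈ lifespan T) :
    (∑' j : ℕ, c t (j + 1)) - (∑' j : ℕ, c τ (j + 1)) =
      -(1 / 2) * (∫ s in τ..t, ∑' p : ℕ × ℕ,
          a (p.1 + 1) (p.2 + 1) * c s (p.1 + 1) * c s (p.2 + 1))
      - (1 / 2) * ∫ s in τ..t, ∑' j : ℕ, a (j + 1) (j + 1) * c s (j + 1) ^ 2 := by
  have hW : IntervalIntegrable (fun s => ∑' p, collisionRate a (c s) p) volume τ t := by
    simpa only [Equiv.tsum_eq] using hc.intervalIntegrable_tsum_collisionRate hK hpos hlin hτ ht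
      (Denumerable.eqv (ℕ × ℕ)).symm.injective
  have hD : IntervalIntegrable (fun s => ∑' j, a (j + 1) (j + 1) * c s (j + 1) ^ 2) volume τ t := by
    simpa only [Function.diag, collisionRate_diag] using
      hc.intervalIntegrable_tsum_collisionRate hK hpos hlin hτ ht Function.diag_injective
  have hnumber := hc.hasSum_integral_netRate hK hsym hpos hlin hτ ht
  simp only [← hc.sub_eq_integral_netRate hK hpos hlin hτ ht] at hnumber
  calc (∑' j : ℕ, c t (j + 1)) - (∑' j : ℕ, c τ (j + 1))
      = ∑' j, (c t (j + 1) - c τ (j + 1)) :=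
        ((hc.memX1plus ht).summable.tsum_sub (hc.memX1plus hτ).summable).symm
    _ = _ := by
        rw [hnumber.tsum_eq, intervalIntegral.integral_sub (hW.const_mul _) (hD.const_mul _),
          intervalIntegral.integral_const_mul, intervalIntegral.integral_const_mul]
        rfl

end IsMildSolution

theorem rbk_number_equation_general
    (a : ℕ → ℕ → ℝ) (K : ℝ) (hK : 0 < K) (β : ℝ) (hβ : β ≤ 1 / 2)
    (hsym : ∀ j k : ℕ, a (j + 1) (k + 1) = a (k + 1) (j + 1))
    (hpos : ∀ j k : ℕ, 0 ≤ a (j + 1) (k + 1))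
    (hbound : ∀ j k : ℕ, a (j + 1) (k + 1) ≤ K * ((((j : ℝ) + 1) * ((k : ℝ) + 1)) ^ β))
    (T : ℝ≥0∞) (c : ℝ → ℕ → ℝ) (hc : IsMildSolution a T c)
    (τ t : ℝ) (hτ : 0 ≤ τ) (hτt : τ ≤ t) (ht : ENNReal.ofReal t < T) :
    (∑' j : ℕ, c t (j + 1)) - (∑' j : ℕ, c τ (j + 1)) =
      -(1 / 2) * (∫ s in τ..t, ∑' p : ℕ × ℕ,
          a (p.1 + 1) (p.2 + 1) * c s (p.1 + 1) * c s (p.2 + 1))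
      - (1 / 2) * ∫ s in τ..t, ∑' j : ℕ, a (j + 1) (j + 1) * c s (j + 1) ^ 2 := by
  have hlin : ∀ j k : ℕ, a (j + 1) (k + 1) ≤ K * (((j : ℝ) + 1) * ((k : ℝ) + 1)) := fun j k =>
    (hbound j k).trans <| by
      gcongr
      exact Real.rpow_le_self_of_one_le (one_le_mul_of_one_le_of_one_le (by simp) (by simp))
        (by linarith)
  exact hc.tsum_sub_tsum_eq hK.le hsym hpos hlin
    ⟨hτ, (ENNReal.ofReal_le_ofReal hτt).trans_lt ht⟩ ⟨hτ.trans hτt, ht⟩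

/-- evolution of the total number of clusters, for
`a_{j,k} ≤ K (jk)^β`, `0 ≤ β ≤ 1/2`:
`Σ_j c_j(t) − Σ_j c_j(τ) = −½ ∫_τ^t Σ_j Σ_k a_{j,k} c_j c_k − ½ ∫_τ^t Σ_j a_{j,j} c_j²`. -/
theorem rbk_number_equation
    (a : ℕ → ℕ → ℝ) (K : ℝ) (hK : 0 < K) (β : ℝ) (hβ0 : 0 ≤ β) (hβ : β ≤ 1 / 2)
    (hsym : ∀ j k : ℕ, a (j + 1) (k + 1) = a (k + 1) (j + 1))
    (hpos : ∀ j k : ℕ, 0 ≤ a (j + 1) (k + 1))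
    (hbound : ∀ j k : ℕ, a (j + 1) (k + 1) ≤ K * ((((j : ℝ) + 1) * ((k : ℝ) + 1)) ^ β))
    (T : ℝ≥0∞) (c : ℝ → ℕ → ℝ) (hc : IsMildSolution a T c)
    (τ t : ℝ) (hτ : 0 ≤ τ) (hτt : τ ≤ t) (ht : ENNReal.ofReal t < T) :
    (∑' j : ℕ, c t (j + 1)) - (∑' j : ℕ, c τ (j + 1)) =
      -(1 / 2) * (∫ s in τ..t, ∑' p : ℕ × ℕ,
          a (p.1 + 1) (p.2 + 1) * c s (p.1 + 1) * c s (p.2 + 1))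
      - (1 / 2) * ∫ s in τ..t, ∑' j : ℕ, a (j + 1) (j + 1) * c s (j + 1) ^ 2 :=
  rbk_number_equation_general a K hK β hβ hsym hpos hbound T c hc τ t hτ hτt ht
end

section
/- Assume that initial value problems for the RBK system have unique solutions, i.e. any two mild solutions on [0,∞) with the same initial condition coincide. Let p ∈ ℕ, λ > 0, and let c be a mild solution on [0,∞) with monodisperse initial condition c_j(0) = λ if j = p and c_j(0) = 0 otherwise. Then for all t ≥ 0: c_p(t) = λ/(1 + λ a_{p,p} t) and c_j(t) = 0 for every j ≠ p. In particular, a solution starting monodisperse stays monodisperse, and {j : c_j(t) > 0} = {p} for all t ≥ 0. -/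
open MeasureTheory Filter Topology
open scoped ENNReal

/-!
For a sequence supported at the single index `p` the gain terms `a_{j+k,k} c_{j+k} c_k` all
vanish (`c_{j+k}` and `c_k` are never both nonzero) and the only loss term is `a_{p,p} c_p²`, so
the RBK system reduces to the Riccati equation `f' = -a_{p,p} f²`, solved by
`f t = λ / (1 + λ a_{p,p} t)`. This explicit solution has the monodisperse initial condition,
so by uniqueness it is the solution.
-/

noncomputable def monodisperse (p : ℕ) (f : ℝ → ℝ) (t : ℝ) (j : ℕ) : ℝ :=
  if j = p then f t else 0

lemma monodisperse_self (p : ℕ) (f : ℝ → ℝ) (t : ℝ) : monodisperse p f t p = f t :=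
  if_pos rfl

lemma monodisperse_of_ne {p j : ℕ} (h : j ≠ p) (f : ℝ → ℝ) (t : ℝ) :
    monodisperse p f t j = 0 :=
  if_neg h

lemma monodisperse_pos_iff {p j : ℕ} {f : ℝ → ℝ} {t : ℝ} (hf : 0 < f t) :
    0 < monodisperse p f t j ↔ j = p := by
  by_cases hj : j = p
  · simp [hj, monodisperse_self, hf]
  · simp [hj, monodisperse_of_ne hj]

section Monodisperse

variable {q : ℕ} {f : ℝ → ℝ}

lemma summable_mul_monodisperse (g : ℕ → ℝ) (t : ℝ) :
    Summable fun k => g k * monodisperse (q + 1) f t (k + 1) :=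
  summable_of_ne_finset_zero (s := {q}) fun k hk => by
    simp [monodisperse, Finset.mem_singleton.not.mp hk]

lemma tsum_mul_monodisperse (g : ℕ → ℝ) (t : ℝ) :
    ∑' k, g k * monodisperse (q + 1) f t (k + 1) = g q * f t := by
  rw [tsum_eq_single q fun k hk => by simp [monodisperse, hk]]
  simp [monodisperse]

theorem isMildSolution_monodisperse (a : ℕ → ℕ → ℝ) (T : ℝ≥0∞)
    (hf_cont : ContinuousOn f (Set.Ici 0)) (hf_nonneg : ∀ t, 0 ≤ t → 0 ≤ f t)
    (hf_bdd : BddAbove (f '' Set.Ici 0))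
    (hf_eq : ∀ t, 0 ≤ t → f t = f 0 - ∫ s in (0:ℝ)..t, a (q + 1) (q + 1) * f s * f s) :
    IsMildSolution a T (monodisperse (q + 1) f) where
  mem t ht _ := by
    refine ⟨fun j => ?_, summable_mul_monodisperse (fun j : ℕ => (j : ℝ) + 1) t⟩
    unfold monodisperse
    split_ifs
    exacts [hf_nonneg t ht, le_rfl]
  cont j := by
    by_cases hj : j = q
    · simpa [monodisperse, hj] using hf_cont.mono fun t ht => ht.1
    · simpa [monodisperse, hj] using continuousOn_const
  bdd := by
    obtain ⟨B, hB⟩ := hf_bdd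
    refine ⟨((q : ℝ) + 1) * B, fun t ht _ => ?_⟩
    rw [norm1, tsum_mul_monodisperse]
    exact mul_le_mul_of_nonneg_left (hB ⟨t, ht, rfl⟩) (by positivity)
  loss_summable j s _ _ := summable_mul_monodisperse _ s
  loss_integrable j t ht _ := by
    simp only [tsum_mul_monodisperse]
    exact ((continuousOn_const.mul hf_cont).mono Set.Icc_subset_Ici_self).intervalIntegrable_of_Icc
      ht
  eqn j t ht _ := by
    have h_no_gain : j + 1 + (q + 1) ≠ q + 1 := by omega
    simp only [tsum_mul_monodisperse]
    simp only [monodisperse_of_ne h_no_gain, mul_zero, zero_mul, zero_sub,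
      intervalIntegral.integral_neg]
    by_cases hj : j = q
    · subst hj
      simpa only [monodisperse_self, ← sub_eq_add_neg] using hf_eq t ht
    · simp [monodisperse_of_ne (by omega : j + 1 ≠ q + 1)]

end Monodisperse

section Riccati

variable {lam A : ℝ}

lemma one_le_riccati_denom (hlam : 0 ≤ lam) (hA : 0 ≤ A) {t : ℝ} (ht : 0 ≤ t) :
    1 ≤ 1 + lam * A * t :=
  le_add_of_nonneg_right (by positivity)

lemma riccati_denom_pos (hlam : 0 ≤ lam) (hA : 0 ≤ A) {t : ℝ} (ht : 0 ≤ t) :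
    0 < 1 + lam * A * t :=
  zero_lt_one.trans_le (one_le_riccati_denom hlam hA ht)

lemma riccati_pos (hlam : 0 < lam) (hA : 0 ≤ A) {t : ℝ} (ht : 0 ≤ t) :
    0 < lam / (1 + lam * A * t) :=
  div_pos hlam (riccati_denom_pos hlam.le hA ht)

lemma hasDerivAt_riccati {t : ℝ} (ht : 1 + lam * A * t ≠ 0) :
    HasDerivAt (fun s => lam / (1 + lam * A * s))
      (-(A * (lam / (1 + lam * A * t)) * (lam / (1 + lam * A * t)))) t := by
  have hden : HasDerivAt (fun s => 1 + lam * A * s) (lam * A) t := by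
    simpa using ((hasDerivAt_id t).const_mul (lam * A)).const_add 1
  refine ((hden.inv ht).const_mul lam).congr_deriv ?_ |>.congr_of_eventuallyEq ?_
  · field_simp
  · simp only [div_eq_mul_inv, Pi.inv_apply, EventuallyEq.rfl]

lemma continuousOn_riccati (hlam : 0 ≤ lam) (hA : 0 ≤ A) :
    ContinuousOn (fun s => lam / (1 + lam * A * s)) (Set.Ici 0) := fun _ ht =>
  (hasDerivAt_riccati (riccati_denom_pos hlam hA ht).ne').continuousAt.continuousWithinAt

lemma integral_riccati (hlam : 0 ≤ lam) (hA : 0 ≤ A) {t : ℝ} (ht : 0 ≤ t) :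
    ∫ s in (0:ℝ)..t, A * (lam / (1 + lam * A * s)) * (lam / (1 + lam * A * s)) =
      lam - lam / (1 + lam * A * t) := by
  have hderiv : ∀ s ∈ Set.uIcc 0 t, HasDerivAt (fun s => lam / (1 + lam * A * s))
      (-(A * (lam / (1 + lam * A * s)) * (lam / (1 + lam * A * s)))) s := fun s hs =>
    hasDerivAt_riccati (riccati_denom_pos hlam hA (Set.uIcc_of_le ht ▸ hs).1).ne'
  have hcont := (continuousOn_riccati hlam hA).mono
    (Set.uIcc_of_le ht ▸ Set.Icc_subset_Ici_self : Set.uIcc 0 t ⊆ Set.Ici 0)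
  have hftc := intervalIntegral.integral_eq_sub_of_hasDerivAt hderiv
    ((continuousOn_const.mul hcont).mul hcont).neg.intervalIntegrable
  rw [intervalIntegral.integral_neg] at hftc
  simp only [mul_zero, add_zero, div_one] at hftc
  linarith

end Riccati

theorem rbk_monodisperse_general
    (a : ℕ → ℕ → ℝ)
    (hpos : ∀ j k : ℕ, 0 ≤ a (j + 1) (k + 1))
    (huniq : ∀ c d : ℝ → ℕ → ℝ,
      IsMildSolution a ⊤ c → IsMildSolution a ⊤ d →
      (∀ j : ℕ, c 0 (j + 1) = d 0 (j + 1)) →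
      ∀ t : ℝ, 0 ≤ t → ∀ j : ℕ, c t (j + 1) = d t (j + 1))
    (p : ℕ) (hp : 1 ≤ p) (lam : ℝ) (hlam : 0 < lam)
    (c : ℝ → ℕ → ℝ) (hc : IsMildSolution a ⊤ c)
    (hinit : ∀ j : ℕ, 1 ≤ j → c 0 j = if j = p then lam else 0) :
    ∀ t : ℝ, 0 ≤ t →
      (c t p = lam / (1 + lam * a p p * t)) ∧
      (∀ j : ℕ, 1 ≤ j → j ≠ p → c t j = 0) ∧
      (∀ j : ℕ, 1 ≤ j → (0 < c t j ↔ j = p)) := by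
  obtain ⟨q, rfl⟩ : ∃ q, p = q + 1 := ⟨p - 1, by omega⟩
  have hA := hpos q q
  set f : ℝ → ℝ := fun t => lam / (1 + lam * a (q + 1) (q + 1) * t) with hf
  have hsol : IsMildSolution a ⊤ (monodisperse (q + 1) f) := by
    refine isMildSolution_monodisperse a ⊤ (continuousOn_riccati hlam.le hA)
      (fun _ ht => (riccati_pos hlam hA ht).le) ⟨lam, ?_⟩ fun t ht => ?_
    · rintro _ ⟨t, ht, rfl⟩
      exact div_le_self hlam.le (one_le_riccati_denom hlam.le hA ht)
    · simp only [hf, integral_riccati hlam.le hA ht, mul_zero, add_zero, div_one]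
      ring
  have hc_eq : ∀ t, 0 ≤ t → ∀ j, 1 ≤ j → c t j = monodisperse (q + 1) f t j := by
    intro t ht j hj
    obtain ⟨m, rfl⟩ : ∃ m, j = m + 1 := ⟨j - 1, by omega⟩
    refine huniq c _ hc hsol (fun k => ?_) t ht m
    simp [hinit (k + 1) (by omega), monodisperse, hf]
  intro t ht
  refine ⟨by rw [hc_eq t ht _ hp, monodisperse_self], fun j hj hne => ?_, fun j hj => ?_⟩
  · rw [hc_eq t ht j hj, monodisperse_of_ne hne]
  · rw [hc_eq t ht j hj]
    exact monodisperse_pos_iff (riccati_pos hlam hA ht)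

/-- assuming uniqueness of solutions to initial value problems,
a solution starting monodisperse (`c_j(0) = λ δ_{j,p}`) stays monodisperse:
`c_p(t) = λ/(1 + λ a_{p,p} t)` and `c_j(t) = 0` for `j ≠ p`; in particular
`{j : c_j(t) > 0} = {p}` for all `t ≥ 0`. -/
theorem rbk_monodisperse
    (a : ℕ → ℕ → ℝ)
    (hsym : ∀ j k : ℕ, a (j + 1) (k + 1) = a (k + 1) (j + 1))
    (hpos : ∀ j k : ℕ, 0 ≤ a (j + 1) (k + 1))
    (huniq : ∀ c d : ℝ → ℕ → ℝ,
      IsMildSolution a ⊤ c → IsMildSolution a ⊤ d →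
      (∀ j : ℕ, c 0 (j + 1) = d 0 (j + 1)) →
      ∀ t : ℝ, 0 ≤ t → ∀ j : ℕ, c t (j + 1) = d t (j + 1))
    (p : ℕ) (hp : 1 ≤ p) (lam : ℝ) (hlam : 0 < lam)
    (c : ℝ → ℕ → ℝ) (hc : IsMildSolution a ⊤ c)
    (hinit : ∀ j : ℕ, 1 ≤ j → c 0 j = if j = p then lam else 0) :
    ∀ t : ℝ, 0 ≤ t →
      (c t p = lam / (1 + lam * a p p * t)) ∧
      (∀ j : ℕ, 1 ≤ j → j ≠ p → c t j = 0) ∧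
      (∀ j : ℕ, 1 ≤ j → (0 < c t j ↔ j = p)) :=
  rbk_monodisperse_general a hpos huniq p hp lam hlam c hc hinit
end

section
/- Assume a_{j,k} = 1 for all j,k ∈ ℕ. Let A₀ > 0 and α ∈ [0,1), and set β := A₀α/(1−α²). Then the function c given by c_j(t) := A₀ α^j/(1 + β t) for j ∈ ℕ and t ≥ 0 is a mild solution of the RBK system on [0,∞) with initial condition c_j(0) = A₀ α^j; moreover, if α ∈ (0,1), then for every j ∈ ℕ, lim_{t→∞} t·c_j(t) = (1−α²)·α^{j−1}, and lim_{t→∞} t·Σ_{j=1}^∞ c_j(t) = 1 + α. -/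
open MeasureTheory Filter Topology
open scoped ENNReal

/-!
The profile `u_j = A₀ α^j` is mapped by the quadratic coagulation operator to a multiple of itself:
the gain `Σ_k u_{j+k} u_k = A₀ α² u_j / (1 - α²)` minus the loss `u_j Σ_k u_k = A₀ α u_j / (1 - α)`
equals `-β u_j`. Hence the ansatz `c(t) = f(t) u` reduces the whole system to the scalar equation
`f' = -β f²`, solved by `f(t) = 1/(1 + β t)`. The large-time limits follow from `t/(1 + β t) → 1/β`.
-/

lemma MemX1plus.summable_s19 {u : ℕ → ℝ} (hu : MemX1plus u) : Summable (fun k : ℕ => u (k + 1)) :=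
  hu.2.of_nonneg_of_le hu.1 fun k =>
    le_mul_of_one_le_left (hu.1 k) (by linarith [k.cast_nonneg (α := ℝ)])

lemma MemX1plus.div_const {u : ℕ → ℝ} (hu : MemX1plus u) {D : ℝ} (hD : 0 ≤ D) :
    MemX1plus (fun j => u j / D) :=
  ⟨fun j => div_nonneg (hu.1 j) hD, (hu.2.div_const D).congr fun _ => mul_div_assoc _ _ _⟩

lemma norm1_div_const (u : ℕ → ℝ) (D : ℝ) : norm1 (fun j => u j / D) = norm1 u / D := by
  simp only [norm1, ← tsum_div_const, mul_div_assoc]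

lemma integral_neg_mul_div_one_add_mul_sq {β t : ℝ} (hβ : 0 ≤ β) (ht : 0 ≤ t) (C : ℝ) :
    ∫ s in (0 : ℝ)..t, -(β * C) / (1 + β * s) ^ 2 = C / (1 + β * t) - C := by
  have hpos : ∀ s ∈ Set.uIcc 0 t, 0 < 1 + β * s := fun s hs => by
    rw [Set.uIcc_of_le ht] at hs
    nlinarith [hs.1]
  have hderiv : ∀ s ∈ Set.uIcc 0 t,
      HasDerivAt (fun u => C / (1 + β * u)) (-(β * C) / (1 + β * s) ^ 2) s := fun s hs => by
    have h := (hasDerivAt_const s C).fun_div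
      (((hasDerivAt_id s).const_mul β).const_add 1) (hpos s hs).ne'
    exact h.congr_deriv (by simp only [id]; ring)
  have hcont : ContinuousOn (fun s => -(β * C) / (1 + β * s) ^ 2) (Set.uIcc 0 t) :=
    continuousOn_const.div (by fun_prop) fun s hs => (pow_pos (hpos s hs) 2).ne'
  rw [intervalIntegral.integral_eq_sub_of_hasDerivAt hderiv hcont.intervalIntegrable]
  simp

lemma tendsto_mul_div_one_add_mul_atTop {β : ℝ} (hβ : 0 < β) (C : ℝ) :
    Tendsto (fun t : ℝ => t * (C / (1 + β * t))) atTop (𝓝 (C / β)) := by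
  have h : Tendsto (fun t : ℝ => C / (t⁻¹ + β)) atTop (𝓝 (C / (0 + β))) :=
    tendsto_const_nhds.div (tendsto_inv_atTop_zero.add tendsto_const_nhds) (by simpa using hβ.ne')
  rw [zero_add] at h
  refine h.congr' ?_
  filter_upwards [eventually_gt_atTop (0 : ℝ)] with t ht
  have : 1 + β * t ≠ 0 := by positivity
  field_simp

theorem isMildSolution_div_one_add_mul {u : ℕ → ℝ} (hu : MemX1plus u) {β : ℝ} (hβ : 0 ≤ β)
    (hdefect : ∀ j : ℕ,
      (∑' k : ℕ, u (j + 1 + (k + 1)) * u (k + 1)) - ∑' k : ℕ, u (j + 1) * u (k + 1)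
        = -(β * u (j + 1))) :
    IsMildSolution (fun _ _ => (1 : ℝ)) ⊤ (fun t j => u j / (1 + β * t)) := by
  have hpos : ∀ t : ℝ, 0 ≤ t → 0 < 1 + β * t := fun t ht => by nlinarith
  have hcont : ∀ C : ℝ, ContinuousOn (fun s : ℝ => C / (1 + β * s)) (Set.Ici 0) :=
    fun C => continuousOn_const.div (by fun_prop) fun s hs => (hpos s hs).ne'
  refine
    { mem := fun t ht _ => hu.div_const (hpos t ht).le
      cont := fun j => (hcont (u (j + 1))).mono fun t ht => ht.1
      bdd := ⟨norm1 u, fun t ht _ => ?_⟩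
      loss_summable := fun j s hs _ => by
        simpa only [one_mul] using hu.summable_s19.div_const (1 + β * s)
      loss_integrable := fun j t ht _ => ?_
      eqn := fun j t ht _ => ?_ }
  · rw [norm1_div_const]
    have hnorm : 0 ≤ norm1 u :=
      tsum_nonneg fun j => mul_nonneg (by positivity) (hu.1 j)
    exact div_le_self hnorm (by nlinarith)
  · simp only [one_mul, tsum_div_const]
    exact ((hcont _).mono (by simp [Set.uIcc_of_le ht, Set.Icc_subset_Ici_self])).intervalIntegrable
  · have hintegrand : ∀ s : ℝ,
        (∑' k : ℕ, 1 * (u (j + 1 + (k + 1)) / (1 + β * s)) * (u (k + 1) / (1 + β * s))) -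
          ∑' k : ℕ, 1 * (u (j + 1) / (1 + β * s)) * (u (k + 1) / (1 + β * s))
          = -(β * u (j + 1)) / (1 + β * s) ^ 2 := fun s => by
      simp only [one_mul, div_mul_div_comm, ← sq, tsum_div_const, ← sub_div, hdefect]
    simp only [intervalIntegral.integral_congr (fun s _ => hintegrand s),
      integral_neg_mul_div_one_add_mul_sq hβ ht]
    simp

section Geometric

variable {A₀ α : ℝ}

lemma memX1plus_geometric (hA₀ : 0 ≤ A₀) (hα0 : 0 ≤ α) (hα1 : α < 1) :
    MemX1plus (fun j => A₀ * α ^ j) := by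
  refine ⟨fun j => by positivity, ?_⟩
  have hlin : Summable (fun j : ℕ => (j : ℝ) * α ^ j) := by
    simpa using summable_pow_mul_geometric_of_norm_lt_one 1
      (r := α) (by rwa [Real.norm_eq_abs, abs_of_nonneg hα0])
  exact ((hlin.mul_left (A₀ * α)).add
    ((summable_geometric_of_lt_one hα0 hα1).mul_left (A₀ * α))).congr fun j => by ring

lemma tsum_geometric_succ (hα0 : 0 ≤ α) (hα1 : α < 1) :
    ∑' k : ℕ, A₀ * α ^ (k + 1) = A₀ * α / (1 - α) := by
  simp only [pow_succ, ← mul_comm α, tsum_mul_left, tsum_geometric_of_lt_one hα0 hα1]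
  ring

lemma coagulation_defect_geometric (A₀ : ℝ) (hα0 : 0 ≤ α) (hα1 : α < 1) (j : ℕ) :
    (∑' k : ℕ, A₀ * α ^ (j + 1 + (k + 1)) * (A₀ * α ^ (k + 1))) -
        ∑' k : ℕ, A₀ * α ^ (j + 1) * (A₀ * α ^ (k + 1))
      = -(A₀ * α / (1 - α ^ 2) * (A₀ * α ^ (j + 1))) := by
  have hα2 : α ^ 2 < 1 := pow_lt_one₀ hα0 hα1 two_ne_zero
  have hgain : ∑' k : ℕ, A₀ * α ^ (j + 1 + (k + 1)) * (A₀ * α ^ (k + 1))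
      = A₀ ^ 2 * α ^ (j + 3) / (1 - α ^ 2) := by
    simp only [show ∀ k : ℕ, A₀ * α ^ (j + 1 + (k + 1)) * (A₀ * α ^ (k + 1))
        = A₀ ^ 2 * α ^ (j + 3) * (α ^ 2) ^ k from fun k => by ring, tsum_mul_left,
      tsum_geometric_of_lt_one (by positivity) hα2, div_eq_mul_inv]
  rw [hgain, tsum_mul_left, tsum_geometric_succ hα0 hα1]
  have : 1 - α ≠ 0 := by linarith
  have : 1 - α ^ 2 ≠ 0 := by linarith
  field_simp
  ring

end Geometric

/-- for constant coefficients `a_{j,k} = 1`, `A₀ > 0`, `α ∈ [0,1)`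
and `β = A₀α/(1−α²)`, the function `c_j(t) = A₀ α^j/(1+βt)` is a mild solution
of the RBK system on `[0,∞)` with `c_j(0) = A₀ α^j`; moreover if `α > 0` then
`t c_j(t) → (1−α²) α^{j−1}` and `t Σ_j c_j(t) → 1 + α` as `t → ∞`. -/
theorem rbk_self_similar_solution
    (A₀ : ℝ) (hA₀ : 0 < A₀) (α : ℝ) (hα0 : 0 ≤ α) (hα1 : α < 1) :
    IsMildSolution (fun _ _ => (1 : ℝ)) ⊤
      (fun t j => A₀ * α ^ j / (1 + (A₀ * α / (1 - α ^ 2)) * t)) ∧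
    (∀ j : ℕ, (fun t (j : ℕ) => A₀ * α ^ j / (1 + (A₀ * α / (1 - α ^ 2)) * t)) 0 (j + 1)
        = A₀ * α ^ (j + 1)) ∧
    (0 < α →
      (∀ j : ℕ, Tendsto
          (fun t : ℝ => t * (A₀ * α ^ (j + 1) / (1 + (A₀ * α / (1 - α ^ 2)) * t)))
          atTop (𝓝 ((1 - α ^ 2) * α ^ j))) ∧
      Tendsto
        (fun t : ℝ => t * ∑' j : ℕ, A₀ * α ^ (j + 1) / (1 + (A₀ * α / (1 - α ^ 2)) * t))
        atTop (𝓝 (1 + α))) := by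
  have h1α2 : 0 < 1 - α ^ 2 := by nlinarith
  have h1α : 0 < 1 - α := by linarith
  refine ⟨isMildSolution_div_one_add_mul (memX1plus_geometric hA₀.le hα0 hα1) (by positivity)
      (coagulation_defect_geometric A₀ hα0 hα1), fun j => by simp, fun hα => ?_⟩
  have hβ : 0 < A₀ * α / (1 - α ^ 2) := by positivity
  refine ⟨fun j => ?_, ?_⟩
  · convert tendsto_mul_div_one_add_mul_atTop hβ (A₀ * α ^ (j + 1)) using 2
    field_simp
    ring
  · simp only [tsum_div_const, tsum_geometric_succ hα0 hα1]
    convert tendsto_mul_div_one_add_mul_atTop hβ (A₀ * α / (1 - α)) using 2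
    field_simp
    ring
end
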